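/- arXiv:2105.07283 — 8 statements merged into one kernel-verified Lean document; each statement's English description precedes it below -/
import Mathlib

section
/- Let 𝒢 be a sub-σ-field of ℋ. Then 𝒢 is sufficient for ℋ with respect to A (i.e. P[A | ℋ] = P[A | 𝒢] almost surely) if and only if the cost-weighted Bayes losses agree: L*_ℋ(t) = L*_𝒢(t) for all t ∈ (0,1). -/
open MeasureTheory

/-- Cost-weighted mean loss `L(H, t) = (1 - t) P[A ∩ Hᶜ] + t P[Aᶜ ∩ H]`. -/
noncomputable def cwLoss {Ω : Type*} {mΩ : MeasurableSpace Ω} (P : Measure Ω) (A H : Set Ω)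
    (t : ℝ) : ℝ :=
  (1 - t) * (P (A ∩ Hᶜ)).toReal + t * (P (Aᶜ ∩ H)).toReal

/-- Cost-weighted Bayes loss `L*_ℱ(t) = inf_{F ∈ ℱ} L(F, t)`. -/
noncomputable def bayesLoss {Ω : Type*} {mΩ : MeasurableSpace Ω} (P : Measure Ω) (A : Set Ω)
    (F : MeasurableSpace Ω) (t : ℝ) : ℝ :=
  ⨅ H : {H : Set Ω // MeasurableSet[F] H}, cwLoss P A H t

/-!
With `f = P[A | ℋ]`, the loss of `H ∈ ℋ` is `(1 - t) P[A] - ∫_H (f - t)`, so the Bayes loss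
of `ℋ` is `(1 - t) P[A] - ∫ (f - t)⁺`, attained at `{f > t}`. With `g = P[A | 𝒢]`, the Bayes
set `{g > t}` of `𝒢` has the same value for `f` as for `g`; equal Bayes losses make it optimal
for `ℋ` too, which forces `f ≤ t` a.e. on `{g ≤ t}`. Letting `t` run through the rationals
gives `f ≤ g` a.e., and `∫ f = ∫ g` turns this into equality.
-/

open Set

section PosPart

variable {α : Type*} {mα : MeasurableSpace α} {μ : Measure α} {h : α → ℝ} {s : Set α}

lemma integral_max_zero_eq_setIntegral (hs : MeasurableSet {x | 0 < h x}) :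
    ∫ x, max (h x) 0 ∂μ = ∫ x in {x | 0 < h x}, h x ∂μ := by
  rw [← integral_indicator hs]
  congr 1 with x
  by_cases hx : 0 < h x
  · simp [hx, hx.le]
  · simp [hx, not_lt.1 hx]

lemma setIntegral_le_integral_max_zero (hh : Integrable h μ) :
    ∫ x in s, h x ∂μ ≤ ∫ x, max (h x) 0 ∂μ :=
  calc ∫ x in s, h x ∂μ ≤ ∫ x in s, max (h x) 0 ∂μ :=
        setIntegral_mono hh.integrableOn hh.pos_part.integrableOn fun _ ↦ le_max_left _ _
    _ ≤ ∫ x, max (h x) 0 ∂μ :=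
        setIntegral_le_integral hh.pos_part (ae_of_all _ fun _ ↦ le_max_right _ _)

lemma ae_nonpos_of_integral_max_zero_le_setIntegral (hh : Integrable h μ)
    (hs : MeasurableSet s) (hle : ∫ x, max (h x) 0 ∂μ ≤ ∫ x in s, h x ∂μ) :
    ∀ᵐ x ∂μ, x ∉ s → h x ≤ 0 := by
  have hsplit :
      ∫ x in s, max (h x) 0 ∂μ + ∫ x in sᶜ, max (h x) 0 ∂μ = ∫ x, max (h x) 0 ∂μ :=
    integral_add_compl hs hh.pos_part
  have hon : ∫ x in s, h x ∂μ ≤ ∫ x in s, max (h x) 0 ∂μ :=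
    setIntegral_mono hh.integrableOn hh.pos_part.integrableOn fun _ ↦ le_max_left _ _
  have hoff : ∫ x in sᶜ, max (h x) 0 ∂μ = 0 :=
    le_antisymm (by linarith) (setIntegral_nonneg hs.compl fun _ _ ↦ le_max_right _ _)
  have hzero := (setIntegral_eq_zero_iff_of_nonneg_ae
    (ae_of_all _ fun _ ↦ le_max_right _ _) hh.pos_part.integrableOn).1 hoff
  filter_upwards [(ae_restrict_iff' hs.compl).1 hzero] with x hx hxs
  exact max_eq_right_iff.1 (hx hxs)

end PosPart

lemma ae_le_of_forall_rat_mem_Ioo {α : Type*} {mα : MeasurableSpace α} {μ : Measure α}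
    {f g : α → ℝ} {a b : ℝ} (hg : ∀ᵐ x ∂μ, a ≤ g x) (hf : ∀ᵐ x ∂μ, f x ≤ b)
    (h : ∀ q : ℚ, (q : ℝ) ∈ Ioo a b → ∀ᵐ x ∂μ, g x ≤ q → f x ≤ q) :
    f ≤ᵐ[μ] g := by
  have hall : ∀ᵐ x ∂μ, ∀ q : ℚ, (q : ℝ) ∈ Ioo a b → g x ≤ q → f x ≤ q := by
    rw [ae_all_iff]
    intro q
    by_cases hq : (q : ℝ) ∈ Ioo a b
    · filter_upwards [h q hq] with x hx _ using hx
    · exact ae_of_all _ fun _ hq' ↦ absurd hq' hq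
  filter_upwards [hall, hg, hf] with x hx hgx hfx
  by_contra! hlt
  obtain ⟨q, hgq, hqf⟩ := exists_rat_btwn hlt
  exact (hx q ⟨hgx.trans_lt hgq, hqf.trans_le hfx⟩ hgq.le).not_gt hqf

section Loss

variable {Ω : Type*} {mΩ : MeasurableSpace Ω} {P : Measure Ω} {A : Set Ω}

lemma cwLoss_eq [IsFiniteMeasure P] (hA : MeasurableSet A) {H : Set Ω} (hH : MeasurableSet H)
    (t : ℝ) : cwLoss P A H t = (1 - t) * P.real A - (P.real (A ∩ H) - t * P.real H) := by
  have hAH := measureReal_inter_add_sdiff (μ := P) (s := A) hH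
  have hHA := measureReal_inter_add_sdiff (μ := P) (s := H) hA
  rw [inter_comm H A] at hHA
  rw [cwLoss, ← sdiff_eq, inter_comm, ← sdiff_eq]
  change (1 - t) * P.real (A \ H) + t * P.real (H \ A) = _
  linear_combination (1 - t) * hAH + t * hHA

variable [IsFiniteMeasure P]

lemma setIntegral_condExp_indicator_sub (hA : MeasurableSet A) {m : MeasurableSpace Ω}
    (hm : m ≤ mΩ) {S : Set Ω} (hS : MeasurableSet[m] S) (t : ℝ) :
    ∫ x in S, (P[A.indicator (fun _ ↦ (1 : ℝ)) | m] x - t) ∂P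
      = P.real (A ∩ S) - t * P.real S := by
  have hind : Integrable (A.indicator fun _ ↦ (1 : ℝ)) P := (integrable_const 1).indicator hA
  rw [integral_sub integrable_condExp.integrableOn (integrable_const t),
    setIntegral_condExp hm hind hS, integral_indicator_const _ hA, setIntegral_const,
    measureReal_restrict_apply hA, smul_eq_mul, smul_eq_mul, mul_one, mul_comm, inter_comm]

/-- The Bayes rule at cost `t` predicts `A` exactly where `P[A | m] > t`. -/
lemma bayesLoss_eq (hA : MeasurableSet A) {m : MeasurableSpace Ω} (hm : m ≤ mΩ) (t : ℝ) :
    bayesLoss P A m t =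
      (1 - t) * P.real A - ∫ x, max (P[A.indicator (fun _ ↦ (1 : ℝ)) | m] x - t) 0 ∂P := by
  set f := P[A.indicator (fun _ ↦ (1 : ℝ)) | m]
  have hloss : ∀ H, MeasurableSet[m] H →
      cwLoss P A H t = (1 - t) * P.real A - ∫ x in H, (f x - t) ∂P :=
    fun H hH ↦ by rw [cwLoss_eq hA (hm _ hH), setIntegral_condExp_indicator_sub hA hm hH]
  have hmeas : MeasurableSet[m] {x | 0 < f x - t} := by
    simp_rw [sub_pos]
    exact measurableSet_lt measurable_const stronglyMeasurable_condExp.measurable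
  have hleast : IsLeast (range fun H : {H // MeasurableSet[m] H} ↦ cwLoss P A H t)
      ((1 - t) * P.real A - ∫ x, max (f x - t) 0 ∂P) := by
    refine ⟨⟨⟨_, hmeas⟩, ?_⟩, ?_⟩
    · dsimp only
      rw [hloss _ hmeas, integral_max_zero_eq_setIntegral (hm _ hmeas)]
    · rintro _ ⟨⟨H, hH⟩, rfl⟩
      dsimp only
      rw [hloss H hH]
      exact sub_le_sub_left
        (setIntegral_le_integral_max_zero (integrable_condExp.sub (integrable_const t))) _
  exact hleast.isGLB.ciInf_eq

lemma ae_condExp_le_of_condExp_le_of_integral_max_sub_eq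
    (hA : MeasurableSet A) {mH mG : MeasurableSpace Ω} (hH : mH ≤ mΩ) (hG : mG ≤ mH) {t : ℝ}
    (heq : ∫ x, max (P[A.indicator (fun _ ↦ (1 : ℝ)) | mH] x - t) 0 ∂P
      = ∫ x, max (P[A.indicator (fun _ ↦ (1 : ℝ)) | mG] x - t) 0 ∂P) :
    ∀ᵐ x ∂P, P[A.indicator (fun _ ↦ (1 : ℝ)) | mG] x ≤ t →
      P[A.indicator (fun _ ↦ (1 : ℝ)) | mH] x ≤ t := by
  set f := P[A.indicator (fun _ ↦ (1 : ℝ)) | mH]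
  set g := P[A.indicator (fun _ ↦ (1 : ℝ)) | mG]
  set S := {x | 0 < g x - t}
  have hS : MeasurableSet[mG] S := by
    simp_rw [S, sub_pos]
    exact measurableSet_lt measurable_const stronglyMeasurable_condExp.measurable
  have hSΩ : MeasurableSet[mΩ] S := hH _ (hG _ hS)
  -- `S` is the Bayes rule of `mG`, and `f`, `g` have the same integral over `mG`-sets
  have hopt : ∫ x, max (f x - t) 0 ∂P = ∫ x in S, (f x - t) ∂P :=
    calc ∫ x, max (f x - t) 0 ∂P = ∫ x, max (g x - t) 0 ∂P := heq
      _ = ∫ x in S, (g x - t) ∂P := integral_max_zero_eq_setIntegral hSΩ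
      _ = ∫ x in S, (f x - t) ∂P := by
        rw [setIntegral_condExp_indicator_sub hA (hG.trans hH) hS,
          setIntegral_condExp_indicator_sub hA hH (hG _ hS)]
  filter_upwards [ae_nonpos_of_integral_max_zero_le_setIntegral
    (integrable_condExp.sub (integrable_const t)) hSΩ hopt.le] with x hx hgx
  exact sub_nonpos.1 (hx (not_lt.2 (sub_nonpos.2 hgx)))

end Loss

theorem sufficiency_iff_equal_bayes_loss_general
    {Ω : Type*} {mΩ : MeasurableSpace Ω} {P : Measure Ω} [IsProbabilityMeasure P]
    {A : Set Ω} (hA : MeasurableSet A)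
    {mH : MeasurableSpace Ω} (hH : mH ≤ mΩ)
    {mG : MeasurableSpace Ω} (hG : mG ≤ mH) :
    (P[A.indicator (fun _ => (1 : ℝ)) | mH] =ᵐ[P] P[A.indicator (fun _ => (1 : ℝ)) | mG])
      ↔ ∀ t ∈ Set.Ioo (0 : ℝ) 1, bayesLoss P A mH t = bayesLoss P A mG t := by
  have hGΩ : mG ≤ mΩ := hG.trans hH
  simp_rw [bayesLoss_eq hA hH, bayesLoss_eq hA hGΩ, sub_right_inj]
  refine ⟨fun hfg _ _ ↦ integral_congr_ae (hfg.mono fun x hx ↦ by simp only [hx]),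
    fun hL ↦ ?_⟩
  have hind : Integrable (A.indicator fun _ ↦ (1 : ℝ)) P := (integrable_const 1).indicator hA
  have hg_nonneg : ∀ᵐ x ∂P, 0 ≤ P[A.indicator (fun _ ↦ (1 : ℝ)) | mG] x :=
    condExp_nonneg (ae_of_all _ (indicator_nonneg fun _ _ ↦ zero_le_one))
  have hf_le_one : ∀ᵐ x ∂P, P[A.indicator (fun _ ↦ (1 : ℝ)) | mH] x ≤ 1 := by
    have := condExp_mono (m := mH) hind (integrable_const 1)
      (ae_of_all _ (indicator_le' (fun _ _ ↦ le_rfl) fun _ _ ↦ zero_le_one))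
    rwa [condExp_const hH] at this
  have hfg := ae_le_of_forall_rat_mem_Ioo hg_nonneg hf_le_one fun q hq ↦
    ae_condExp_le_of_condExp_le_of_integral_max_sub_eq hA hH hG (hL q hq)
  refine (integral_eq_iff_of_ae_le integrable_condExp integrable_condExp hfg).1 ?_
  rw [integral_condExp hH, integral_condExp hGΩ]

/-- **Theorem 1 (characterisation of sufficiency)**: a sub-σ-field `𝒢 ⊆ ℋ` is sufficient for
`ℋ` with respect to `A` (i.e. `P[A | ℋ] = P[A | 𝒢]` a.s.) if and only if the cost-weighted
Bayes losses of `ℋ` and `𝒢` agree for all `t ∈ (0, 1)`. -/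
theorem sufficiency_iff_equal_bayes_loss
    {Ω : Type*} {mΩ : MeasurableSpace Ω} {P : Measure Ω} [IsProbabilityMeasure P]
    {A : Set Ω} (hA : MeasurableSet A) (hA0 : 0 < P A) (hA1 : P A < 1)
    {mH : MeasurableSpace Ω} (hH : mH ≤ mΩ) (hAH : ¬ MeasurableSet[mH] A)
    {mG : MeasurableSpace Ω} (hG : mG ≤ mH) :
    (P[A.indicator (fun _ => (1 : ℝ)) | mH] =ᵐ[P] P[A.indicator (fun _ => (1 : ℝ)) | mG])
      ↔ ∀ t ∈ Set.Ioo (0 : ℝ) 1, bayesLoss P A mH t = bayesLoss P A mG t :=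
  sufficiency_iff_equal_bayes_loss_general hA hH hG
end

section
/- Let T : (Ω, ℋ) → (Ω_T, 𝒜_T) be a measurable mapping into a measurable space and let σ(T) ⊂ ℋ be the σ-field generated by T. Then the following are equivalent: (a) L*_ℋ(t) = L*_{σ(T)}(t) for all t ∈ (0,1); (b) T is sufficient for ℋ with respect to A, i.e. P[A | ℋ] = P[A | σ(T)] almost surely; (c) there is a measurable function G : (Ω_T, 𝒜_T) → ℝ such that P[A | ℋ] = G(T) almost surely. -/
/-!
For an `m`-measurable `H`, `L(H, t) = (1 - t) P[A] - ∫_H (P[A | m] - t) dP`, so the Bayes loss is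
`L*_m(t) = (1 - t) P[A] - E[(P[A | m] - t)⁺]`, attained at `H = {P[A | m] > t}`. Integrating over
`t ∈ (0, 1)` turns `E[(X - t)⁺]` into `E[X²] / 2`, so equal Bayes losses of `σ(T) ⊆ ℋ` force
`E[P[A | ℋ]²] = E[P[A | σ(T)]²]`. As `P[A | σ(T)]` is the `L²` projection of `P[A | ℋ]`, the
difference of these second moments is `E[(P[A | ℋ] - P[A | σ(T)])²]`, which therefore vanishes.
The equivalence of sufficiency with factorisation through `T` is the Doob–Dynkin lemma.
-/

open MeasureTheory

open Filter Set

section PositivePart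

variable {α : Type*} [MeasurableSpace α] {μ : Measure α} {f : α → ℝ}

lemma setIntegral_le_integral_max_zero_s5 (hf : Integrable f μ) {s : Set α} (hs : MeasurableSet s) :
    ∫ x in s, f x ∂μ ≤ ∫ x, max (f x) 0 ∂μ :=
  calc ∫ x in s, f x ∂μ ≤ ∫ x in s, max (f x) 0 ∂μ :=
        setIntegral_mono_on hf.integrableOn hf.pos_part.integrableOn hs
          fun _ _ ↦ le_max_left _ _
    _ ≤ ∫ x, max (f x) 0 ∂μ :=
        setIntegral_le_integral hf.pos_part (.of_forall fun _ ↦ le_max_right _ _)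

lemma setIntegral_setOf_pos_eq_integral_max_zero (hf : Measurable f) :
    ∫ x in {x | 0 < f x}, f x ∂μ = ∫ x, max (f x) 0 ∂μ := by
  rw [← integral_indicator (measurableSet_lt measurable_const hf)]
  congr 1 with x
  by_cases hx : 0 < f x
  · simp [hx, hx.le]
  · simp [hx, not_lt.mp hx]

end PositivePart

lemma integral_Ioo_zero_one_max_sub {x : ℝ} (hx : x ∈ Icc (0 : ℝ) 1) :
    ∫ t in Ioo (0 : ℝ) 1, max (x - t) 0 = x ^ 2 / 2 := by
  have hcont : Continuous fun t : ℝ ↦ max (x - t) 0 := by fun_prop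
  rw [← integral_Ioc_eq_integral_Ioo, ← intervalIntegral.integral_of_le zero_le_one,
    ← intervalIntegral.integral_add_adjacent_intervals (hcont.intervalIntegrable 0 x)
      (hcont.intervalIntegrable x 1)]
  have hleft : ∫ t in (0 : ℝ)..x, max (x - t) 0 = ∫ t in (0 : ℝ)..x, (x - t) :=
    intervalIntegral.integral_congr fun t ht ↦ by
      rw [uIcc_of_le hx.1] at ht
      exact max_eq_left (by linarith [ht.2])
  have hright : ∫ t in x..(1 : ℝ), max (x - t) 0 = 0 := by
    rw [intervalIntegral.integral_congr (g := fun _ ↦ (0 : ℝ)) fun t ht ↦ by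
      rw [uIcc_of_le hx.2] at ht
      exact max_eq_right (by linarith [ht.1])]
    simp
  rw [hleft, hright, intervalIntegral.integral_sub intervalIntegrable_const
    intervalIntegral.intervalIntegrable_id]
  simp
  ring

section BayesLoss

variable {Ω : Type*} {m m₀ : MeasurableSpace Ω} {μ : Measure[m₀] Ω} [IsFiniteMeasure μ]
  {A : Set Ω}

lemma cwLoss_eq_sub_setIntegral_condExp (hA : MeasurableSet A) (hm : m ≤ m₀) {H : Set Ω}
    (hH : MeasurableSet[m] H) (t : ℝ) :
    cwLoss μ A H t
      = (1 - t) * μ.real A - ∫ ω in H, (μ[A.indicator (fun _ ↦ (1 : ℝ)) | m] ω - t) ∂μ := by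
  have hAH : ∫ ω in H, μ[A.indicator (fun _ ↦ (1 : ℝ)) | m] ω ∂μ = μ.real (A ∩ H) := by
    rw [setIntegral_condExp hm ((integrable_const 1).indicator hA) hH,
      setIntegral_indicator hA, setIntegral_const, smul_eq_mul, mul_one, inter_comm]
  have hA_split : μ.real (A ∩ H) + μ.real (A ∩ Hᶜ) = μ.real A := by
    rw [← sdiff_eq]; exact measureReal_inter_add_sdiff (hm H hH)
  have hH_split : μ.real (A ∩ H) + μ.real (Aᶜ ∩ H) = μ.real H := by
    rw [inter_comm Aᶜ, ← sdiff_eq, inter_comm]; exact measureReal_inter_add_sdiff hA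
  rw [integral_sub integrable_condExp.integrableOn (integrable_const t).integrableOn, hAH,
    setIntegral_const, smul_eq_mul, cwLoss]
  change (1 - t) * μ.real (A ∩ Hᶜ) + t * μ.real (Aᶜ ∩ H) = _
  linear_combination (1 - t) * hA_split + t * hH_split

lemma bayesLoss_eq_sub_integral_condExp (hA : MeasurableSet A) (hm : m ≤ m₀) (t : ℝ) :
    bayesLoss μ A m t
      = (1 - t) * μ.real A - ∫ ω, max (μ[A.indicator (fun _ ↦ (1 : ℝ)) | m] ω - t) 0 ∂μ := by
  set X := μ[A.indicator (fun _ ↦ (1 : ℝ)) | m]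
  have hXm : StronglyMeasurable[m] X := stronglyMeasurable_condExp
  have hleast : IsLeast (range fun H : {H : Set Ω // MeasurableSet[m] H} ↦ cwLoss μ A H t)
      ((1 - t) * μ.real A - ∫ ω, max (X ω - t) 0 ∂μ) := by
    have hpos : MeasurableSet[m] {ω | 0 < X ω - t} :=
      measurableSet_lt measurable_const (hXm.measurable.sub_const t)
    refine ⟨⟨⟨_, hpos⟩, ?_⟩, ?_⟩
    · dsimp only
      rw [cwLoss_eq_sub_setIntegral_condExp hA hm hpos, setIntegral_setOf_pos_eq_integral_max_zero
        ((hXm.mono hm).measurable.sub_const t)]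
    · rintro _ ⟨H, rfl⟩
      dsimp only
      rw [cwLoss_eq_sub_setIntegral_condExp hA hm H.2]
      exact sub_le_sub_left (setIntegral_le_integral_max_zero_s5
        (integrable_condExp.sub (integrable_const t)) (hm _ H.2)) _
  have : Nonempty {H : Set Ω // MeasurableSet[m] H} := ⟨⟨∅, @MeasurableSet.empty _ m⟩⟩
  exact hleast.isGLB.ciInf_eq

end BayesLoss

lemma integral_Ioo_zero_one_integral_max_sub {Ω : Type*} {mΩ : MeasurableSpace Ω}
    {μ : Measure Ω} [IsFiniteMeasure μ] {X : Ω → ℝ} (hX : Measurable X)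
    (hX01 : ∀ᵐ ω ∂μ, X ω ∈ Icc (0 : ℝ) 1) :
    ∫ t in Ioo (0 : ℝ) 1, ∫ ω, max (X ω - t) 0 ∂μ = (∫ ω, X ω ^ 2 ∂μ) / 2 := by
  set ν := volume.restrict (Ioo (0 : ℝ) 1)
  have : IsFiniteMeasure ν := isFiniteMeasure_restrict.mpr measure_Ioo_lt_top.ne
  have hbound : ∀ᵐ p ∂ν.prod μ, ‖max (X p.2 - p.1) 0‖ ≤ 1 := by
    filter_upwards [Measure.quasiMeasurePreserving_fst.ae (ae_restrict_mem measurableSet_Ioo),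
      Measure.quasiMeasurePreserving_snd.ae hX01] with p ht hx
    rw [Real.norm_of_nonneg (le_max_right _ _)]
    exact max_le (by linarith [ht.1, hx.2]) zero_le_one
  have hint : Integrable (Function.uncurry fun t ω ↦ max (X ω - t) 0) (ν.prod μ) :=
    (integrable_const 1).mono'
      (((hX.comp measurable_snd).sub measurable_fst).max measurable_const).aestronglyMeasurable
      hbound
  rw [integral_integral_swap hint, ← integral_div]
  exact integral_congr_ae (hX01.mono fun ω hω ↦ integral_Ioo_zero_one_max_sub hω)

section SquareIntegrable

variable {Ω : Type*} {m m₀ : MeasurableSpace Ω} {μ : Measure[m₀] Ω} [IsFiniteMeasure μ]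
  {X : Ω → ℝ}

lemma integral_sq_sub_condExp (hm : m ≤ m₀) (hX : MemLp X 2 μ) :
    ∫ ω, (X ω - μ[X | m] ω) ^ 2 ∂μ = ∫ ω, X ω ^ 2 ∂μ - ∫ ω, μ[X | m] ω ^ 2 ∂μ := by
  rw [← integral_condExp hm]
  change ∫ ω, ProbabilityTheory.condVar m X μ ω ∂μ = _
  rw [integral_congr_ae (ProbabilityTheory.condVar_ae_eq_condExp_sq_sub_sq_condExp hm hX),
    integral_sub' (g := μ[X | m] ^ 2) integrable_condExp (hX.condExp one_le_two).integrable_sq,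
    integral_condExp hm]
  rfl

lemma ae_eq_condExp_of_integral_sq_eq (hm : m ≤ m₀) (hX : MemLp X 2 μ)
    (h : ∫ ω, X ω ^ 2 ∂μ = ∫ ω, μ[X | m] ω ^ 2 ∂μ) : X =ᵐ[μ] μ[X | m] := by
  have hint : Integrable (fun ω ↦ (X ω - μ[X | m] ω) ^ 2) μ :=
    (hX.sub (hX.condExp one_le_two)).integrable_sq
  have hsq : (fun ω ↦ (X ω - μ[X | m] ω) ^ 2) =ᵐ[μ] 0 :=
    (integral_eq_zero_iff_of_nonneg (fun ω ↦ sq_nonneg _) hint).mp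
      (by rw [integral_sq_sub_condExp hm hX, h, sub_self])
  filter_upwards [hsq] with ω hω
  exact sub_eq_zero.mp (pow_eq_zero_iff two_ne_zero |>.mp hω)

end SquareIntegrable

lemma condExp_indicator_one_mem_Icc {Ω : Type*} {m m₀ : MeasurableSpace Ω} {μ : Measure[m₀] Ω}
    (A : Set Ω) :
    ∀ᵐ ω ∂μ, μ[A.indicator (fun _ ↦ (1 : ℝ)) | m] ω ∈ Icc (0 : ℝ) 1 := by
  have h01 : (0 : ℝ) ≤ 1 := zero_le_one
  filter_upwards [condExp_nonneg (m := m) (.of_forall (indicator_nonneg fun _ _ ↦ h01)),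
    condExp_le_nonneg_const (m := m) h01 (.of_forall (indicator_le_self' fun _ _ ↦ h01))]
    with ω h0 h1
  exact ⟨h0, h1⟩

section Sufficiency

variable {Ω : Type*} {m₂ m m₀ : MeasurableSpace Ω} {μ : Measure[m₀] Ω} [IsFiniteMeasure μ]

lemma bayesLoss_eqOn_Ioo_iff_condExp_ae_eq {A : Set Ω} (hA : MeasurableSet A) (hm₂ : m₂ ≤ m)
    (hm : m ≤ m₀) :
    (∀ t ∈ Ioo (0 : ℝ) 1, bayesLoss μ A m t = bayesLoss μ A m₂ t)
      ↔ μ[A.indicator (fun _ ↦ (1 : ℝ)) | m] =ᵐ[μ] μ[A.indicator (fun _ ↦ (1 : ℝ)) | m₂] := by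
  set f := A.indicator (fun _ ↦ (1 : ℝ))
  have hm₂₀ : m₂ ≤ m₀ := hm₂.trans hm
  have htower : μ[μ[f | m] | m₂] =ᵐ[μ] μ[f | m₂] := condExp_condExp_of_le hm₂ hm
  constructor
  · intro hloss
    have hrisk : ∫ t in Ioo (0 : ℝ) 1, ∫ ω, max (μ[f | m] ω - t) 0 ∂μ
        = ∫ t in Ioo (0 : ℝ) 1, ∫ ω, max (μ[f | m₂] ω - t) 0 ∂μ :=
      setIntegral_congr_fun measurableSet_Ioo fun t ht ↦ by
        have := hloss t ht
        rw [bayesLoss_eq_sub_integral_condExp hA hm,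
          bayesLoss_eq_sub_integral_condExp hA hm₂₀] at this
        linarith
    rw [integral_Ioo_zero_one_integral_max_sub (stronglyMeasurable_condExp.mono hm).measurable
        (condExp_indicator_one_mem_Icc A),
      integral_Ioo_zero_one_integral_max_sub (stronglyMeasurable_condExp.mono hm₂₀).measurable
        (condExp_indicator_one_mem_Icc A)] at hrisk
    have hsq : ∫ ω, μ[f | m] ω ^ 2 ∂μ = ∫ ω, μ[μ[f | m] | m₂] ω ^ 2 ∂μ := by
      have : ∫ ω, μ[μ[f | m] | m₂] ω ^ 2 ∂μ = ∫ ω, μ[f | m₂] ω ^ 2 ∂μ :=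
        integral_congr_ae (htower.mono fun ω hω ↦ by simp only [hω])
      linarith
    have hL2 : MemLp (μ[f | m]) 2 μ :=
      (memLp_indicator_const 2 hA 1 (.inr (measure_ne_top μ A))).condExp one_le_two
    exact (ae_eq_condExp_of_integral_sq_eq hm₂₀ hL2 hsq).trans htower
  · intro h t _
    rw [bayesLoss_eq_sub_integral_condExp hA hm, bayesLoss_eq_sub_integral_condExp hA hm₂₀,
      integral_congr_ae (h.mono fun ω hω ↦ by rw [hω])]

lemma condExp_ae_eq_condExp_iff_aestronglyMeasurable {E : Type*} [NormedAddCommGroup E]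
    [NormedSpace ℝ E] [CompleteSpace E] {f : Ω → E} (hm₂ : m₂ ≤ m) (hm : m ≤ m₀) :
    μ[f | m] =ᵐ[μ] μ[f | m₂] ↔ AEStronglyMeasurable[m₂] (μ[f | m]) μ := by
  constructor
  · exact fun h ↦ ⟨_, stronglyMeasurable_condExp, h⟩
  · intro h
    exact (condExp_of_aestronglyMeasurable' (hm₂.trans hm) h integrable_condExp).symm.trans
      (condExp_condExp_of_le hm₂ hm)

end Sufficiency

lemma aestronglyMeasurable_comap_iff_exists_measurable_comp {Ω ΩT Z : Type*}
    {mΩ : MeasurableSpace Ω} {mT : MeasurableSpace ΩT} {μ : Measure Ω} {T : Ω → ΩT}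
    [TopologicalSpace Z] [PolishSpace Z] [MeasurableSpace Z] [BorelSpace Z] [Nonempty Z]
    {g : Ω → Z} :
    AEStronglyMeasurable[mT.comap T] g μ
      ↔ ∃ G : ΩT → Z, Measurable G ∧ g =ᵐ[μ] fun ω ↦ G (T ω) := by
  constructor
  · rintro ⟨g', hg', hgg'⟩
    obtain ⟨G, hG, rfl⟩ := hg'.exists_eq_measurable_comp
    exact ⟨G, hG.measurable, hgg'⟩
  · rintro ⟨G, hG, hgG⟩
    exact ⟨_, (hG.comp (comap_measurable T)).stronglyMeasurable, hgG⟩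

theorem admissibility_characterisation_general
    {Ω : Type*} {mΩ : MeasurableSpace Ω} {P : Measure Ω} [IsProbabilityMeasure P]
    {A : Set Ω} (hA : MeasurableSet A)
    {mH : MeasurableSpace Ω} (hH : mH ≤ mΩ)
    {ΩT : Type*} {mT : MeasurableSpace ΩT} {T : Ω → ΩT}
    (hT : @Measurable Ω ΩT mH mT T) :
    ((∀ t ∈ Set.Ioo (0 : ℝ) 1,
        bayesLoss P A mH t = bayesLoss P A (MeasurableSpace.comap T mT) t)
      ↔ P[A.indicator (fun _ => (1 : ℝ)) | mH]
          =ᵐ[P] P[A.indicator (fun _ => (1 : ℝ)) | MeasurableSpace.comap T mT])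
    ∧ ((P[A.indicator (fun _ => (1 : ℝ)) | mH]
          =ᵐ[P] P[A.indicator (fun _ => (1 : ℝ)) | MeasurableSpace.comap T mT])
      ↔ ∃ G : ΩT → ℝ, Measurable G ∧
          P[A.indicator (fun _ => (1 : ℝ)) | mH] =ᵐ[P] fun ω => G (T ω)) := by
  have hTH : MeasurableSpace.comap T mT ≤ mH := hT.comap_le
  refine ⟨bayesLoss_eqOn_Ioo_iff_condExp_ae_eq hA hTH hH, ?_⟩
  rw [condExp_ae_eq_condExp_iff_aestronglyMeasurable hTH hH,
    aestronglyMeasurable_comap_iff_exists_measurable_comp]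

/-- **Corollary 1 (admissibility)**: for a measurable mapping `T : (Ω, ℋ) → (Ω_T, 𝒜_T)`, the
following are equivalent: (a) the cost-weighted Bayes losses of `ℋ` and `σ(T)` agree on
`(0, 1)`; (b) `T` is sufficient for `ℋ` with respect to `A`; (c) `P[A | ℋ] = G ∘ T` a.s. for
some measurable `G : Ω_T → ℝ`. -/
theorem admissibility_characterisation
    {Ω : Type*} {mΩ : MeasurableSpace Ω} {P : Measure Ω} [IsProbabilityMeasure P]
    {A : Set Ω} (hA : MeasurableSet A) (hA0 : 0 < P A) (hA1 : P A < 1)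
    {mH : MeasurableSpace Ω} (hH : mH ≤ mΩ) (hAH : ¬ MeasurableSet[mH] A)
    {ΩT : Type*} {mT : MeasurableSpace ΩT} {T : Ω → ΩT}
    (hT : @Measurable Ω ΩT mH mT T) :
    ((∀ t ∈ Set.Ioo (0 : ℝ) 1,
        bayesLoss P A mH t = bayesLoss P A (MeasurableSpace.comap T mT) t)
      ↔ P[A.indicator (fun _ => (1 : ℝ)) | mH]
          =ᵐ[P] P[A.indicator (fun _ => (1 : ℝ)) | MeasurableSpace.comap T mT])
    ∧ ((P[A.indicator (fun _ => (1 : ℝ)) | mH]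
          =ᵐ[P] P[A.indicator (fun _ => (1 : ℝ)) | MeasurableSpace.comap T mT])
      ↔ ∃ G : ΩT → ℝ, Measurable G ∧
          P[A.indicator (fun _ => (1 : ℝ)) | mH] =ᵐ[P] fun ω => G (T ω)) :=
  admissibility_characterisation_general hA hH hT
end

section
/- Let T be an ℋ-measurable real-valued random variable and fix a version Ψ of P[A | ℋ]. Assume T and Ψ are strongly comonotonic, i.e. for all ω₁, ω₂ ∈ Ω one has T(ω₁) < T(ω₂) if and only if Ψ(ω₁) < Ψ(ω₂). Then T is sufficient for ℋ with respect to A, i.e. P[A | ℋ] = P[A | σ(T)] almost surely. -/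
/-!
Strong comonotonicity makes `Ψ` a nondecreasing function of `T`, hence `σ(T)`-measurable.
By the tower property `P[A | σ(T)] = E[P[A | ℋ] | σ(T)] = E[Ψ | σ(T)] = Ψ = P[A | ℋ]`.
-/

open MeasureTheory

/-- The sublevel set `{Ψ < c}` is the preimage under `T` of the lower closure of its image. -/
theorem measurable_comap_of_le_imp_le {Ω α β : Type*}
    [LinearOrder α] [TopologicalSpace α] [OrderClosedTopology α]
    [MeasurableSpace α] [OpensMeasurableSpace α]
    [LinearOrder β] [TopologicalSpace β] [OrderTopology β] [SecondCountableTopology β]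
    [MeasurableSpace β] [BorelSpace β] {T : Ω → α} {Ψ : Ω → β}
    (hmono : ∀ ω₁ ω₂, T ω₁ ≤ T ω₂ → Ψ ω₁ ≤ Ψ ω₂) :
    Measurable[MeasurableSpace.comap T ‹_›] Ψ := by
  refine measurable_of_Iio fun c => ⟨{t | ∃ ω, Ψ ω < c ∧ t ≤ T ω}, ?_, ?_⟩
  · have hlower : IsLowerSet {t | ∃ ω, Ψ ω < c ∧ t ≤ T ω} :=
      fun _ _ hba ⟨ω, hω, hat⟩ => ⟨ω, hω, hba.trans hat⟩
    exact hlower.ordConnected.measurableSet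
  · ext ω
    exact ⟨fun ⟨ω', hω', hle⟩ => (hmono _ _ hle).trans_lt hω', fun h => ⟨ω, h, le_rfl⟩⟩

theorem condExp_ae_eq_condExp_of_aestronglyMeasurable {α E : Type*}
    [NormedAddCommGroup E] [NormedSpace ℝ E] [CompleteSpace E]
    {m₁ m₂ m₀ : MeasurableSpace α} {μ : Measure α} [IsFiniteMeasure μ] {f : α → E}
    (hm₁₂ : m₁ ≤ m₂) (hm₂ : m₂ ≤ m₀) (h : AEStronglyMeasurable[m₁] (μ[f | m₂]) μ) :
    μ[f | m₂] =ᵐ[μ] μ[f | m₁] :=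
  (condExp_of_aestronglyMeasurable' (hm₁₂.trans hm₂) h integrable_condExp).symm.trans
    (condExp_condExp_of_le hm₁₂ hm₂)

theorem comonotone_implies_sufficient_general
    {Ω : Type*} {mΩ : MeasurableSpace Ω} {P : Measure Ω} [IsProbabilityMeasure P]
    {A : Set Ω}
    {mH : MeasurableSpace Ω} (hH : mH ≤ mΩ)
    {T : Ω → ℝ} (hT : Measurable[mH] T)
    {Ψ : Ω → ℝ} (hΨ : Ψ =ᵐ[P] P[A.indicator (fun _ => (1 : ℝ)) | mH])
    (hcomon : ∀ ω₁ ω₂ : Ω, T ω₁ < T ω₂ ↔ Ψ ω₁ < Ψ ω₂) :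
    P[A.indicator (fun _ => (1 : ℝ)) | mH]
      =ᵐ[P] P[A.indicator (fun _ => (1 : ℝ)) | MeasurableSpace.comap T Real.measurableSpace] := by
  have hΨσT : Measurable[MeasurableSpace.comap T Real.measurableSpace] Ψ :=
    measurable_comap_of_le_imp_le fun ω₁ ω₂ hle =>
      not_lt.1 fun hlt => hle.not_gt ((hcomon ω₂ ω₁).2 hlt)
  exact condExp_ae_eq_condExp_of_aestronglyMeasurable hT.comap_le hH
    (hΨσT.stronglyMeasurable.aestronglyMeasurable.congr hΨ)

/-- **Proposition 3 (comonotonicity criterion for sufficiency)**: if an `ℋ`-measurable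
real-valued `T` is strongly comonotonic with a version `Ψ` of the posterior probability
`P[A | ℋ]`, then `T` is sufficient for `ℋ` with respect to `A`, i.e.
`P[A | ℋ] = P[A | σ(T)]` almost surely. -/
theorem comonotone_implies_sufficient
    {Ω : Type*} {mΩ : MeasurableSpace Ω} {P : Measure Ω} [IsProbabilityMeasure P]
    {A : Set Ω} (hA : MeasurableSet A) (hA0 : 0 < P A) (hA1 : P A < 1)
    {mH : MeasurableSpace Ω} (hH : mH ≤ mΩ) (hAH : ¬ MeasurableSet[mH] A)
    {T : Ω → ℝ} (hT : Measurable[mH] T)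
    {Ψ : Ω → ℝ} (hΨ : Ψ =ᵐ[P] P[A.indicator (fun _ => (1 : ℝ)) | mH])
    (hcomon : ∀ ω₁ ω₂ : Ω, T ω₁ < T ω₂ ↔ Ψ ω₁ < Ψ ω₂) :
    P[A.indicator (fun _ => (1 : ℝ)) | mH]
      =ᵐ[P] P[A.indicator (fun _ => (1 : ℝ)) | MeasurableSpace.comap T Real.measurableSpace] :=
  comonotone_implies_sufficient_general hH hT hΨ hcomon
end

section
/- Let 𝒢 be another sub-σ-field of 𝒜 such that ℋ and 𝒢 are conditionally independent given A and conditionally independent given Aᶜ (i.e. P[H ∩ G | A] = P[H | A] P[G | A] and P[H ∩ G | Aᶜ] = P[H | Aᶜ] P[G | Aᶜ] for all H ∈ ℋ, G ∈ 𝒢). Assume L*_𝒢(t) > 0 for some t ∈ (0,1). If P[A | ℋ] = E[ P[A | 𝒢] | ℋ ] almost surely, then A and ℋ are independent, i.e. P[A ∩ H] = P[A] P[H] for all H ∈ ℋ (hence P[A | ℋ] = P[A] almost surely). -/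
open MeasureTheory

/- Let `f = P[A | 𝒢]`. Since `f` is `𝒢`-measurable, conditional independence of `ℋ` and `𝒢` given
`A` (resp. `Aᶜ`) says that `f` has the same mean on `H ∩ A` as on `A` (resp. on `H ∩ Aᶜ` as on
`Aᶜ`), and the tower hypothesis gives `∫_H f = P[A ∩ H]`. Writing `q = ∫_A f`, these identities
combine to `(P[A] - q) (P[A ∩ H] - P[A] P[H]) = 0`. If `q = P[A]`, then `0 ≤ f ≤ 1` forces
`f = 1_A` a.s., so `{f = 1}` is a `𝒢`-measurable set of zero loss, contradicting `L*_𝒢(t) > 0`. -/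

section CondIndep

variable {Ω : Type*} {m mΩ : MeasurableSpace Ω} {μ : Measure Ω}

lemma integral_eq_of_forall_measurableSet_eq {E : Type*} [NormedAddCommGroup E]
    [NormedSpace ℝ E] (hm : m ≤ mΩ) {ν : Measure Ω} {f : Ω → E}
    (hf : StronglyMeasurable[m] f) (h : ∀ s, MeasurableSet[m] s → μ s = ν s) :
    ∫ x, f x ∂μ = ∫ x, f x ∂ν := by
  have htrim : μ.trim hm = ν.trim hm := @Measure.ext _ m _ _ fun s hs => by
    rw [trim_measurableSet_eq hm hs, trim_measurableSet_eq hm hs, h s hs]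
  rw [integral_trim hm hf, integral_trim hm hf, htrim]

lemma measureReal_mul_setIntegral_inter_eq (hm : m ≤ mΩ) {f : Ω → ℝ}
    (hf : StronglyMeasurable[m] f) {H S : Set Ω}
    (hci : ∀ G, MeasurableSet[m] G → μ (H ∩ G ∩ S) * μ S = μ (H ∩ S) * μ (G ∩ S)) :
    μ.real S * ∫ x in H ∩ S, f x ∂μ = μ.real (H ∩ S) * ∫ x in S, f x ∂μ := by
  have h := integral_eq_of_forall_measurableSet_eq hm hf
    (μ := μ S • μ.restrict (H ∩ S)) (ν := μ (H ∩ S) • μ.restrict S) fun G hG => by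
      rw [Measure.smul_apply, Measure.smul_apply, Measure.restrict_apply (hm G hG),
        Measure.restrict_apply (hm G hG), smul_eq_mul, smul_eq_mul, mul_comm, ← hci G hG,
        ← Set.inter_assoc, Set.inter_comm G H]
  simpa [integral_smul_measure, Measure.real] using h

end CondIndep

lemma measureReal_inter_eq_mul_of_setIntegral {Ω : Type*} {mΩ : MeasurableSpace Ω}
    {P : Measure Ω} [IsProbabilityMeasure P] {A H : Set Ω} (hA : MeasurableSet A)
    {f : Ω → ℝ} (hf : Integrable f P)
    (hciA : P.real A * ∫ x in H ∩ A, f x ∂P = P.real (H ∩ A) * ∫ x in A, f x ∂P)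
    (hciAc : P.real Aᶜ * ∫ x in H ∩ Aᶜ, f x ∂P = P.real (H ∩ Aᶜ) * ∫ x in Aᶜ, f x ∂P)
    (hfH : ∫ x in H, f x ∂P = P.real (A ∩ H)) (hf_total : ∫ x, f x ∂P = P.real A)
    (hfA : ∫ x in A, f x ∂P ≠ P.real A) :
    P.real (A ∩ H) = P.real A * P.real H := by
  have hsplitH : ∫ x in H ∩ A, f x ∂P + ∫ x in H ∩ Aᶜ, f x ∂P = P.real (A ∩ H) := by
    rw [← Set.sdiff_eq, integral_inter_add_sdiff hA hf.integrableOn, hfH]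
  have hsplitA : ∫ x in A, f x ∂P + ∫ x in Aᶜ, f x ∂P = P.real A := by
    rw [integral_add_compl hA hf, hf_total]
  have hsplitP : P.real (H ∩ A) + P.real (H ∩ Aᶜ) = P.real H := by
    rw [← Set.sdiff_eq, measureReal_inter_add_sdiff hA]
  rw [probReal_compl_eq_one_sub hA] at hciAc
  rw [Set.inter_comm H A] at hciA hsplitH hsplitP
  have key : (P.real A - ∫ x in A, f x ∂P) * (P.real (A ∩ H) - P.real A * P.real H) = 0 := by
    linear_combination (1 - P.real A) * hciA + P.real A * hciAc
      - P.real A * (1 - P.real A) * hsplitH + P.real A * (P.real H - P.real (A ∩ H)) * hsplitA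
      + P.real A * (∫ x in Aᶜ, f x ∂P) * hsplitP
  exact sub_eq_zero.1 ((mul_eq_zero.1 key).resolve_left (sub_ne_zero.2 hfA.symm))

section Loss

variable {Ω : Type*} {mΩ : MeasurableSpace Ω} {P : Measure Ω} {A H : Set Ω} {t : ℝ}

lemma cwLoss_nonneg (ht0 : 0 ≤ t) (ht1 : t ≤ 1) : 0 ≤ cwLoss P A H t := by
  unfold cwLoss
  exact add_nonneg (mul_nonneg (sub_nonneg.2 ht1) ENNReal.toReal_nonneg)
    (mul_nonneg ht0 ENNReal.toReal_nonneg)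

lemma bayesLoss_le_cwLoss {F : MeasurableSpace Ω} (ht0 : 0 ≤ t) (ht1 : t ≤ 1)
    (hH : MeasurableSet[F] H) : bayesLoss P A F t ≤ cwLoss P A H t :=
  ciInf_le (f := fun H' : {H' : Set Ω // MeasurableSet[F] H'} => cwLoss P A H' t)
    ⟨0, Set.forall_mem_range.2 fun _ => cwLoss_nonneg ht0 ht1⟩ ⟨H, hH⟩

lemma cwLoss_eq_zero_of_ae_eq (h : H =ᵐ[P] A) : cwLoss P A H t = 0 := by
  obtain ⟨hHA, hAH⟩ := ae_eq_set.1 h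
  rw [Set.sdiff_eq, Set.inter_comm] at hHA
  rw [Set.sdiff_eq] at hAH
  simp [cwLoss, hHA, hAH]

end Loss

lemma preimage_one_ae_eq_of_ae_eq_indicator {Ω : Type*} {mΩ : MeasurableSpace Ω}
    {μ : Measure Ω} {A : Set Ω} {f : Ω → ℝ} (h : f =ᵐ[μ] A.indicator 1) :
    f ⁻¹' {1} =ᵐ[μ] A := by
  filter_upwards [h] with x hx
  change (x ∈ f ⁻¹' {1}) = (x ∈ A)
  by_cases hxA : x ∈ A <;> simp [hx, hxA]

lemma ae_eq_indicator_one_of_setIntegral_eq {Ω : Type*} {mΩ : MeasurableSpace Ω}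
    {μ : Measure Ω} [IsFiniteMeasure μ] {A : Set Ω} (hA : MeasurableSet A) {f : Ω → ℝ}
    (hf : Integrable f μ) (hf0 : 0 ≤ᵐ[μ] f) (hf1 : f ≤ᵐ[μ] 1)
    (hfA : ∫ x in A, f x ∂μ = μ.real A) (hfAc : ∫ x in Aᶜ, f x ∂μ = 0) :
    f =ᵐ[μ] A.indicator 1 := by
  have hone : ∀ᵐ x ∂μ, x ∈ A → f x = 1 := by
    have hint : ∫ x in A, (1 - f x) ∂μ = 0 := by
      rw [integral_sub (integrable_const _) hf.restrict, hfA]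
      simp
    have h := (setIntegral_eq_zero_iff_of_nonneg_ae
      (ae_restrict_of_ae (hf1.mono fun x hx => sub_nonneg.2 hx))
      ((integrable_const _).sub hf).integrableOn).1 hint
    filter_upwards [(ae_restrict_iff' hA).1 h] with x hx hxA
    exact (sub_eq_zero.1 (hx hxA)).symm
  have hzero : ∀ᵐ x ∂μ, x ∈ Aᶜ → f x = 0 :=
    (ae_restrict_iff' hA.compl).1
      ((setIntegral_eq_zero_iff_of_nonneg_ae (ae_restrict_of_ae hf0) hf.integrableOn).1 hfAc)
  filter_upwards [hone, hzero] with x hx1 hx0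
  by_cases hxA : x ∈ A
  · simp [hxA, hx1 hxA]
  · simp [hxA, hx0 hxA]

section CondExp

variable {Ω : Type*} {m mΩ : MeasurableSpace Ω} {μ : Measure Ω} {A : Set Ω}

lemma condExp_indicator_one_ae_eq_indicator_of_setIntegral_eq [IsFiniteMeasure μ]
    (hm : m ≤ mΩ) (hA : MeasurableSet A)
    (h : ∫ x in A, μ[A.indicator (1 : Ω → ℝ) | m] x ∂μ = μ.real A) :
    μ[A.indicator (1 : Ω → ℝ) | m] =ᵐ[μ] A.indicator 1 := by
  have hind : Integrable (A.indicator (1 : Ω → ℝ)) μ := (integrable_const 1).indicator hA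
  have hf0 : 0 ≤ᵐ[μ] μ[A.indicator (1 : Ω → ℝ) | m] :=
    condExp_nonneg (.of_forall (Set.indicator_nonneg fun _ _ => zero_le_one))
  have hf1 : μ[A.indicator (1 : Ω → ℝ) | m] ≤ᵐ[μ] 1 := by
    have h := condExp_mono (m := m) hind (integrable_const (1 : ℝ))
      (.of_forall (Set.indicator_le_self' fun _ _ => zero_le_one))
    rwa [condExp_const hm] at h
  refine ae_eq_indicator_one_of_setIntegral_eq hA integrable_condExp hf0 hf1 h ?_
  have htotal := integral_add_compl hA (integrable_condExp (m := m) (μ := μ)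
    (f := A.indicator (1 : Ω → ℝ)))
  rw [integral_condExp hm, integral_indicator_one hA, h] at htotal
  linarith

lemma bayesLoss_nonpos_of_condExp_ae_eq_indicator {t : ℝ} (ht0 : 0 ≤ t) (ht1 : t ≤ 1)
    (h : μ[A.indicator (1 : Ω → ℝ) | m] =ᵐ[μ] A.indicator 1) : bayesLoss μ A m t ≤ 0 :=
  calc bayesLoss μ A m t
      ≤ cwLoss μ A (μ[A.indicator (1 : Ω → ℝ) | m] ⁻¹' {1}) t :=
        bayesLoss_le_cwLoss ht0 ht1
          (stronglyMeasurable_condExp.measurable (measurableSet_singleton 1))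
    _ = 0 := cwLoss_eq_zero_of_ae_eq (preimage_one_ae_eq_of_ae_eq_indicator h)

end CondExp

theorem cond_indep_tower_implies_independent_general
    {Ω : Type*} {mΩ : MeasurableSpace Ω} {P : Measure Ω} [IsProbabilityMeasure P]
    {A : Set Ω} (hA : MeasurableSet A)
    {mH : MeasurableSpace Ω} (hH : mH ≤ mΩ)
    {mG : MeasurableSpace Ω} (hG : mG ≤ mΩ)
    (hciA : ∀ H G : Set Ω, MeasurableSet[mH] H → MeasurableSet[mG] G →
      P (H ∩ G ∩ A) * P A = P (H ∩ A) * P (G ∩ A))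
    (hciAc : ∀ H G : Set Ω, MeasurableSet[mH] H → MeasurableSet[mG] G →
      P (H ∩ G ∩ Aᶜ) * P Aᶜ = P (H ∩ Aᶜ) * P (G ∩ Aᶜ))
    (hpos : ∃ t ∈ Set.Ioo (0 : ℝ) 1, 0 < bayesLoss P A mG t)
    (hsuff : P[A.indicator (fun _ => (1 : ℝ)) | mH]
      =ᵐ[P] P[P[A.indicator (fun _ => (1 : ℝ)) | mG] | mH]) :
    ∀ H : Set Ω, MeasurableSet[mH] H → P (A ∩ H) = P A * P H := by
  intro H hHm
  set f := P[A.indicator (fun _ => (1 : ℝ)) | mG]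
  have hfH : ∫ x in H, f x ∂P = P.real (A ∩ H) := calc
    ∫ x in H, f x ∂P = ∫ x in H, P[f | mH] x ∂P :=
      (setIntegral_condExp hH integrable_condExp hHm).symm
    _ = ∫ x in H, P[A.indicator (fun _ => (1 : ℝ)) | mH] x ∂P :=
      setIntegral_congr_ae (hH _ hHm) (hsuff.mono fun _ hx _ => hx.symm)
    _ = P.real (A ∩ H) := by
      rw [setIntegral_condExp hH ((integrable_const 1).indicator hA) hHm,
        setIntegral_indicator hA]
      simp [Set.inter_comm]
  by_cases hfA : ∫ x in A, f x ∂P = P.real A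
  · obtain ⟨t, ht, hloss⟩ := hpos
    exact absurd (bayesLoss_nonpos_of_condExp_ae_eq_indicator ht.1.le ht.2.le
      (condExp_indicator_one_ae_eq_indicator_of_setIntegral_eq hG hA hfA)) hloss.not_ge
  have hindep := measureReal_inter_eq_mul_of_setIntegral hA integrable_condExp
    (measureReal_mul_setIntegral_inter_eq hG stronglyMeasurable_condExp (hciA H · hHm))
    (measureReal_mul_setIntegral_inter_eq hG stronglyMeasurable_condExp (hciAc H · hHm))
    hfH ((integral_condExp hG).trans (integral_indicator_one hA)) hfA
  rwa [← ENNReal.toReal_eq_toReal_iff' (measure_ne_top _ _) (by finiteness), ENNReal.toReal_mul]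

/-- **Lemma 1**: if `ℋ` and `𝒢` are conditionally independent given `A` and given `Aᶜ`
(expressed by cross-multiplied identities to avoid division), `L*_𝒢(t) > 0` for some
`t ∈ (0, 1)` and `P[A | ℋ] = E[P[A | 𝒢] | ℋ]` a.s., then `A` and `ℋ` are independent. -/
theorem cond_indep_tower_implies_independent
    {Ω : Type*} {mΩ : MeasurableSpace Ω} {P : Measure Ω} [IsProbabilityMeasure P]
    {A : Set Ω} (hA : MeasurableSet A) (hA0 : 0 < P A) (hA1 : P A < 1)
    {mH : MeasurableSpace Ω} (hH : mH ≤ mΩ) (hAH : ¬ MeasurableSet[mH] A)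
    {mG : MeasurableSpace Ω} (hG : mG ≤ mΩ)
    (hciA : ∀ H G : Set Ω, MeasurableSet[mH] H → MeasurableSet[mG] G →
      P (H ∩ G ∩ A) * P A = P (H ∩ A) * P (G ∩ A))
    (hciAc : ∀ H G : Set Ω, MeasurableSet[mH] H → MeasurableSet[mG] G →
      P (H ∩ G ∩ Aᶜ) * P Aᶜ = P (H ∩ Aᶜ) * P (G ∩ Aᶜ))
    (hpos : ∃ t ∈ Set.Ioo (0 : ℝ) 1, 0 < bayesLoss P A mG t)
    (hsuff : P[A.indicator (fun _ => (1 : ℝ)) | mH]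
      =ᵐ[P] P[P[A.indicator (fun _ => (1 : ℝ)) | mG] | mH]) :
    ∀ H : Set Ω, MeasurableSet[mH] H → P (A ∩ H) = P A * P H :=
  cond_indep_tower_implies_independent_general hA hH hG hciA hciAc hpos hsuff
end

section
/- Let Ψ = P[A | ℋ]. Then twice the area under the cost-weighted Bayes loss curve equals the refinement loss: 2 ∫₀¹ L*_ℋ(t) dt = E[Ψ(1−Ψ)]. -/
/-!
For a fixed cost `t`, conditioning on `ℋ` turns the loss of `H ∈ ℋ` into
`L(H, t) = E[(1 - t) Ψ; Hᶜ] + E[t (1 - Ψ); H]`, which is smallest for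
`H = {t (1 - Ψ) ≤ (1 - t) Ψ}`; hence `L*_ℋ(t) = E[min((1 - t) Ψ, t (1 - Ψ))]`.
Integrating in `t` and exchanging the integrals (Fubini), the claim reduces to
`∫₀¹ min((1 - t) ψ, t (1 - ψ)) dt = ψ (1 - ψ) / 2` for `ψ ∈ [0, 1]`: the area of a triangle
with base `[0, 1]` and apex `ψ (1 - ψ)` at `t = ψ`.
-/

open MeasureTheory

open Set
open scoped ProbabilityTheory

lemma integral_min_one_sub_mul_mul_one_sub {ψ : ℝ} (h0 : 0 ≤ ψ) (h1 : ψ ≤ 1) :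
    ∫ t in (0 : ℝ)..1, min ((1 - t) * ψ) (t * (1 - ψ)) = ψ * (1 - ψ) / 2 := by
  have hc : Continuous fun t : ℝ => min ((1 - t) * ψ) (t * (1 - ψ)) := by fun_prop
  have below : ∫ t in (0 : ℝ)..ψ, min ((1 - t) * ψ) (t * (1 - ψ))
      = ∫ t in (0 : ℝ)..ψ, t * (1 - ψ) :=
    intervalIntegral.integral_congr fun t ht => by
      rw [uIcc_of_le h0] at ht
      exact min_eq_right (by nlinarith [ht.1, ht.2])
  have above : ∫ t in ψ..1, min ((1 - t) * ψ) (t * (1 - ψ)) = ∫ t in ψ..1, (1 - t) * ψ :=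
    intervalIntegral.integral_congr fun t ht => by
      rw [uIcc_of_le h1] at ht
      exact min_eq_left (by nlinarith [ht.1, ht.2])
  rw [← intervalIntegral.integral_add_adjacent_intervals (b := ψ) (hc.intervalIntegrable _ _)
    (hc.intervalIntegrable _ _), below, above]
  simp [intervalIntegral.integral_mul_const, integral_id,
    intervalIntegral.integral_comp_sub_left (fun x : ℝ => x)]
  ring

lemma intervalIntegral_integral_min_eq_integral_mul_one_sub {α : Type*} {mα : MeasurableSpace α}
    {μ : Measure α} [IsFiniteMeasure μ] {f : α → ℝ} (hf : AEStronglyMeasurable f μ)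
    (hf01 : ∀ᵐ x ∂μ, f x ∈ Icc 0 1) :
    ∫ t in (0 : ℝ)..1, ∫ x, min ((1 - t) * f x) (t * (1 - f x)) ∂μ
      = ∫ x, f x * (1 - f x) / 2 ∂μ := by
  rw [intervalIntegral_integral_swap]
  · exact integral_congr_ae <| hf01.mono fun x hx =>
      integral_min_one_sub_mul_mul_one_sub hx.1 hx.2
  rw [uIoc_of_le zero_le_one]
  refine Integrable.of_bound ?_ 1 ?_
  · exact Continuous.comp_aestronglyMeasurable₂ (g := fun t y => min ((1 - t) * y) (t * (1 - y)))
      (by fun_prop) measurable_fst.aestronglyMeasurable hf.comp_snd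
  · filter_upwards [Measure.quasiMeasurePreserving_fst.ae (ae_restrict_mem measurableSet_Ioc),
      Measure.quasiMeasurePreserving_snd.ae hf01] with p ⟨ht0, ht1⟩ ⟨hy0, hy1⟩
    have hnonneg : 0 ≤ min ((1 - p.1) * f p.2) (p.1 * (1 - f p.2)) :=
      le_min (by nlinarith) (by nlinarith)
    rw [Function.uncurry_apply_pair, Real.norm_of_nonneg hnonneg]
    exact (min_le_left _ _).trans (by nlinarith)

section ConditionalProbability

variable {Ω : Type*} {mH mΩ : MeasurableSpace Ω} {P : Measure Ω} [IsFiniteMeasure P]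
  {A H : Set Ω}

local notation "Ψ" => P⟦A | mH⟧

lemma condExp_indicator_one_mem_Icc_s12 (hA : MeasurableSet A) (hH : mH ≤ mΩ) :
    ∀ᵐ ω ∂P, Ψ ω ∈ Icc 0 1 := by
  have hle : A.indicator (fun _ => (1 : ℝ)) ≤ᵐ[P] fun _ => 1 :=
    .of_forall fun ω => indicator_le_self' (fun _ _ => zero_le_one) ω
  have hle_one := condExp_mono (m := mH) ((integrable_const (1 : ℝ)).indicator hA)
    (integrable_const 1) hle
  rw [condExp_const hH] at hle_one
  filter_upwards [condExp_nonneg (m := mH)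
    (.of_forall (indicator_nonneg fun _ _ => zero_le_one (α := ℝ))), hle_one]
    with ω h0 h1 using ⟨h0, h1⟩

lemma measureReal_inter_eq_setIntegral_condExp (hA : MeasurableSet A) (hH : mH ≤ mΩ)
    (hHm : MeasurableSet[mH] H) : P.real (A ∩ H) = ∫ ω in H, Ψ ω ∂P := by
  rw [setIntegral_condExp hH ((integrable_const (1 : ℝ)).indicator hA) hHm,
    setIntegral_indicator hA, setIntegral_const, smul_eq_mul, mul_one, inter_comm]

lemma measureReal_compl_inter_eq_setIntegral_condExp (hA : MeasurableSet A) (hH : mH ≤ mΩ)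
    (hHm : MeasurableSet[mH] H) : P.real (Aᶜ ∩ H) = ∫ ω in H, 1 - Ψ ω ∂P := by
  rw [integral_sub (integrable_const 1) integrable_condExp.integrableOn,
    ← measureReal_inter_eq_setIntegral_condExp hA hH hHm, setIntegral_const, smul_eq_mul,
    mul_one, ← sdiff_eq_compl_inter, inter_comm]
  exact eq_sub_of_add_eq' (measureReal_inter_add_sdiff hA)

lemma cwLoss_eq_setIntegral (hA : MeasurableSet A) (hH : mH ≤ mΩ) (hHm : MeasurableSet[mH] H)
    (t : ℝ) :
    cwLoss P A H t = ∫ ω in Hᶜ, (1 - t) * Ψ ω ∂P + ∫ ω in H, t * (1 - Ψ ω) ∂P := by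
  rw [integral_const_mul, integral_const_mul,
    ← measureReal_inter_eq_setIntegral_condExp hA hH hHm.compl,
    ← measureReal_compl_inter_eq_setIntegral_condExp hA hH hHm]
  rfl

lemma integrable_min_mul_condExp (t : ℝ) :
    Integrable (fun ω => min ((1 - t) * Ψ ω) (t * (1 - Ψ ω))) P :=
  (integrable_condExp.const_mul _).inf (((integrable_const 1).sub integrable_condExp).const_mul _)

lemma integral_min_le_cwLoss (hA : MeasurableSet A) (hH : mH ≤ mΩ) (hHm : MeasurableSet[mH] H)
    (t : ℝ) : ∫ ω, min ((1 - t) * Ψ ω) (t * (1 - Ψ ω)) ∂P ≤ cwLoss P A H t := by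
  rw [cwLoss_eq_setIntegral hA hH hHm,
    ← integral_add_compl (hH _ hHm).compl (integrable_min_mul_condExp t), compl_compl]
  exact add_le_add
    (setIntegral_mono (integrable_min_mul_condExp t).integrableOn
      (integrable_condExp.const_mul _).integrableOn fun _ => min_le_left _ _)
    (setIntegral_mono (integrable_min_mul_condExp t).integrableOn
      (((integrable_const 1).sub integrable_condExp).const_mul _).integrableOn
      fun _ => min_le_right _ _)

lemma exists_cwLoss_eq_integral_min (hA : MeasurableSet A) (hH : mH ≤ mΩ) (t : ℝ) :
    ∃ H, MeasurableSet[mH] H ∧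
      cwLoss P A H t = ∫ ω, min ((1 - t) * Ψ ω) (t * (1 - Ψ ω)) ∂P := by
  set H := {ω | t * (1 - Ψ ω) ≤ (1 - t) * Ψ ω}
  have hHm : MeasurableSet[mH] H := measurableSet_le (by fun_prop) (by fun_prop)
  refine ⟨H, hHm, ?_⟩
  rw [cwLoss_eq_setIntegral hA hH hHm,
    ← integral_add_compl (hH _ hHm).compl (integrable_min_mul_condExp t), compl_compl]
  congr 1
  · refine setIntegral_congr_fun (hH _ hHm).compl fun ω hω => ?_
    rw [mem_compl_iff, mem_ofPred_eq, not_le] at hω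
    exact (min_eq_left hω.le).symm
  · exact setIntegral_congr_fun (hH _ hHm) fun ω hω => (min_eq_right hω).symm

lemma bayesLoss_eq_integral_min (hA : MeasurableSet A) (hH : mH ≤ mΩ) (t : ℝ) :
    bayesLoss P A mH t = ∫ ω, min ((1 - t) * Ψ ω) (t * (1 - Ψ ω)) ∂P := by
  have : Nonempty {H : Set Ω // MeasurableSet[mH] H} := ⟨⟨∅, @MeasurableSet.empty Ω mH⟩⟩
  refine le_antisymm ?_ (le_ciInf fun H => integral_min_le_cwLoss hA hH H.2 t)
  have hbdd : BddBelow (range fun H : {H : Set Ω // MeasurableSet[mH] H} => cwLoss P A H t) :=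
    ⟨_, forall_mem_range.2 fun H => integral_min_le_cwLoss hA hH H.2 t⟩
  obtain ⟨H, hHm, hloss⟩ := exists_cwLoss_eq_integral_min (P := P) hA hH t
  exact (ciInf_le hbdd ⟨H, hHm⟩).trans_eq hloss

end ConditionalProbability

theorem area_under_bayes_loss_curve_eq_refinement_loss_general
    {Ω : Type*} {mΩ : MeasurableSpace Ω} {P : Measure Ω} [IsProbabilityMeasure P]
    {A : Set Ω} (hA : MeasurableSet A)
    {mH : MeasurableSpace Ω} (hH : mH ≤ mΩ) :
    2 * ∫ t in (0 : ℝ)..1, bayesLoss P A mH t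
      = ∫ ω, (P[A.indicator (fun _ => (1 : ℝ)) | mH]) ω
          * (1 - (P[A.indicator (fun _ => (1 : ℝ)) | mH]) ω) ∂P := by
  simp_rw [bayesLoss_eq_integral_min hA hH,
    intervalIntegral_integral_min_eq_integral_mul_one_sub integrable_condExp.aestronglyMeasurable
      (condExp_indicator_one_mem_Icc_s12 hA hH), integral_div]
  ring

/-- **Proposition 6, eq. (area*)**: twice the area under the cost-weighted Bayes loss curve
of `ℋ` equals the refinement loss `E[Ψ (1 − Ψ)]`, where `Ψ = P[A | ℋ]`. -/
theorem area_under_bayes_loss_curve_eq_refinement_loss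
    {Ω : Type*} {mΩ : MeasurableSpace Ω} {P : Measure Ω} [IsProbabilityMeasure P]
    {A : Set Ω} (hA : MeasurableSet A) (hA0 : 0 < P A) (hA1 : P A < 1)
    {mH : MeasurableSpace Ω} (hH : mH ≤ mΩ) (hAH : ¬ MeasurableSet[mH] A) :
    2 * ∫ t in (0 : ℝ)..1, bayesLoss P A mH t
      = ∫ ω, (P[A.indicator (fun _ => (1 : ℝ)) | mH]) ω
          * (1 - (P[A.indicator (fun _ => (1 : ℝ)) | mH]) ω) ∂P :=
  area_under_bayes_loss_curve_eq_refinement_loss_general hA hH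
end

section
/- Let 𝒢 be a sub-σ-field of ℋ, Ψ = P[A | 𝒢] a version of the conditional probability with values in [0,1], and B(t) = L({Ψ > t}, t) its Brier curve. Then B(t) = E[min((1−t)Ψ, t(1−Ψ))] for all t ∈ [0,1]; in particular, B is concave and continuous on [0,1] with B(0) = 0. -/
/-!
Write `S = {Ψ > t}`. Since `S` is `𝒢`-measurable and `Ψ` is calibrated,
`P[A ∩ Sᶜ] = E[Ψ; Sᶜ]` and `P[Aᶜ ∩ S] = E[1 - Ψ; S]`, so
`B(t) = E[(1 - t) Ψ; Ψ ≤ t] + E[t (1 - Ψ); Ψ > t]`. On `{Ψ ≤ t}` the first cost is the smaller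
one and on `{Ψ > t}` the second, hence `B(t) = E[min((1 - t) Ψ, t (1 - Ψ))]`. As a function of
`t` the integrand is a minimum of two affine functions with slopes in `[-1, 1]`, so its
expectation is concave and `1`-Lipschitz.
-/

open MeasureTheory

/-- The smaller of the costs of predicting "not in `A`" (`(1 - t) p`) and "in `A`"
(`t (1 - p)`) when `A` has probability `p`. -/
def bayesRisk (t p : ℝ) : ℝ := min ((1 - t) * p) (t * (1 - p))

section bayesRisk

variable {t p : ℝ}

theorem bayesRisk_of_le (h : p ≤ t) : bayesRisk t p = (1 - t) * p :=
  min_eq_left (by nlinarith)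

theorem bayesRisk_of_lt (h : t < p) : bayesRisk t p = t * (1 - p) :=
  min_eq_right (by nlinarith)

theorem bayesRisk_zero_left (hp : 0 ≤ p) : bayesRisk 0 p = 0 := by
  simp [bayesRisk, hp]

theorem concaveOn_bayesRisk (p : ℝ) : ConcaveOn ℝ Set.univ fun t => bayesRisk t p := by
  have h₁ : ConcaveOn ℝ Set.univ fun t : ℝ => (1 - t) * p :=
    ⟨convex_univ, fun x _ y _ a b _ _ hab => le_of_eq (by
      simp only [smul_eq_mul]; linear_combination p * hab)⟩
  have h₂ : ConcaveOn ℝ Set.univ fun t : ℝ => t * (1 - p) :=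
    ⟨convex_univ, fun x _ y _ a b _ _ _ => le_of_eq (by simp only [smul_eq_mul]; ring)⟩
  exact h₁.inf h₂

theorem lipschitzWith_bayesRisk (hp : p ∈ Set.Icc (0 : ℝ) 1) :
    LipschitzWith 1 fun t => bayesRisk t p := by
  have h₁ : LipschitzWith 1 fun t : ℝ => (1 - t) * p := .of_dist_le_mul fun s t => by
    rw [Real.dist_eq, Real.dist_eq, NNReal.coe_one, one_mul,
      show (1 - s) * p - (1 - t) * p = -(p * (s - t)) by ring, abs_neg, abs_mul,
      abs_of_nonneg hp.1]
    exact mul_le_of_le_one_left (abs_nonneg _) hp.2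
  have h₂ : LipschitzWith 1 fun t : ℝ => t * (1 - p) := .of_dist_le_mul fun s t => by
    rw [Real.dist_eq, Real.dist_eq, NNReal.coe_one, one_mul, ← sub_mul, abs_mul,
      abs_of_nonneg (sub_nonneg.2 hp.2)]
    exact mul_le_of_le_one_right (abs_nonneg _) (by linarith [hp.1])
  rw [← max_self 1]
  exact h₁.min h₂

end bayesRisk

section Integral

variable {Ω : Type*} {m m₀ : MeasurableSpace Ω} {μ : Measure Ω}

theorem lipschitzWith_integral {X E : Type*} [PseudoMetricSpace X] [NormedAddCommGroup E]
    [NormedSpace ℝ E] [IsProbabilityMeasure μ] {F : X → Ω → E} {K : NNReal}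
    (hF : ∀ x, Integrable (F x) μ) (hK : ∀ ω, LipschitzWith K fun x => F x ω) :
    LipschitzWith K fun x => ∫ ω, F x ω ∂μ := .of_dist_le_mul fun x y => by
  rw [dist_eq_norm, ← integral_sub (hF x) (hF y)]
  calc ‖∫ ω, (F x ω - F y ω) ∂μ‖ ≤ ∫ ω, ‖F x ω - F y ω‖ ∂μ := norm_integral_le_integral_norm _
    _ ≤ ∫ _, K * dist x y ∂μ :=
      integral_mono ((hF x).sub (hF y)).norm (integrable_const _) fun ω => by
        simpa [dist_eq_norm] using (hK ω).dist_le_mul x y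
    _ = K * dist x y := by simp

theorem integrable_bayesRisk_comp [IsFiniteMeasure μ] {f : Ω → ℝ} (hf : Integrable f μ)
    (t : ℝ) : Integrable (fun ω => bayesRisk t (f ω)) μ :=
  (hf.const_mul (1 - t)).inf (((integrable_const 1).sub hf).const_mul t)

variable [IsFiniteMeasure μ] {A s : Set Ω} {Ψ : Ω → ℝ}

theorem measureReal_inter_eq_setIntegral_of_ae_eq_condExp (hm : m ≤ m₀)
    (hA : MeasurableSet A) (hΨ : Ψ =ᵐ[μ] μ[A.indicator (fun _ => (1 : ℝ)) | m])
    (hs : MeasurableSet[m] s) : μ.real (A ∩ s) = ∫ ω in s, Ψ ω ∂μ :=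
  calc μ.real (A ∩ s) = ∫ ω in s, A.indicator (fun _ => (1 : ℝ)) ω ∂μ := by
        rw [integral_indicator_const _ hA, measureReal_restrict_apply hA, smul_eq_mul, mul_one]
    _ = ∫ ω in s, (μ[A.indicator (fun _ => (1 : ℝ)) | m]) ω ∂μ :=
        (setIntegral_condExp hm ((integrable_const 1).indicator hA) hs).symm
    _ = ∫ ω in s, Ψ ω ∂μ := integral_congr_ae (ae_restrict_of_ae hΨ.symm)

theorem measureReal_compl_inter_eq_setIntegral_of_ae_eq_condExp (hm : m ≤ m₀)
    (hA : MeasurableSet A) (hΨ : Ψ =ᵐ[μ] μ[A.indicator (fun _ => (1 : ℝ)) | m])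
    (hs : MeasurableSet[m] s) : μ.real (Aᶜ ∩ s) = ∫ ω in s, (1 - Ψ ω) ∂μ := by
  have hΨi : Integrable Ψ μ := integrable_condExp.congr hΨ.symm
  have hsplit : μ.real (s ∩ A) + μ.real (Aᶜ ∩ s) = μ.real s := by
    rw [Set.inter_comm Aᶜ, ← Set.sdiff_eq]
    exact measureReal_inter_add_sdiff hA
  rw [integral_sub (integrable_const 1).integrableOn hΨi.integrableOn, setIntegral_const,
    smul_eq_mul, mul_one, ← measureReal_inter_eq_setIntegral_of_ae_eq_condExp hm hA hΨ hs,
    Set.inter_comm A]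
  linarith

theorem cwLoss_eq_integral_bayesRisk (hm : m ≤ m₀) (hA : MeasurableSet A)
    (hΨm : Measurable[m] Ψ) (hΨ : Ψ =ᵐ[μ] μ[A.indicator (fun _ => (1 : ℝ)) | m]) (t : ℝ) :
    cwLoss μ A {ω | Ψ ω > t} t = ∫ ω, bayesRisk t (Ψ ω) ∂μ := by
  set S := {ω | Ψ ω > t}
  have hSm : MeasurableSet[m] S := hΨm measurableSet_Ioi
  have hS : MeasurableSet S := hm _ hSm
  calc cwLoss μ A S t = (1 - t) * ∫ ω in Sᶜ, Ψ ω ∂μ + t * ∫ ω in S, (1 - Ψ ω) ∂μ := by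
        rw [cwLoss, ← measureReal_def, ← measureReal_def,
          measureReal_inter_eq_setIntegral_of_ae_eq_condExp hm hA hΨ hSm.compl,
          measureReal_compl_inter_eq_setIntegral_of_ae_eq_condExp hm hA hΨ hSm]
    _ = ∫ ω in Sᶜ, bayesRisk t (Ψ ω) ∂μ + ∫ ω in S, bayesRisk t (Ψ ω) ∂μ := by
        rw [← integral_const_mul, ← integral_const_mul]
        congr 1
        · exact setIntegral_congr_fun hS.compl fun ω hω => (bayesRisk_of_le (not_lt.1 hω)).symm
        · exact setIntegral_congr_fun hS fun ω hω => (bayesRisk_of_lt hω).symm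
    _ = ∫ ω, bayesRisk t (Ψ ω) ∂μ := by
        rw [add_comm]
        exact integral_add_compl hS
          (integrable_bayesRisk_comp (integrable_condExp.congr hΨ.symm) t)

end Integral

theorem brier_curve_representation_concave_continuous_general
    {Ω : Type*} {mΩ : MeasurableSpace Ω} {P : Measure Ω} [IsProbabilityMeasure P]
    {A : Set Ω} (hA : MeasurableSet A)
    {mH : MeasurableSpace Ω} (hH : mH ≤ mΩ)
    {mG : MeasurableSpace Ω} (hG : mG ≤ mH)
    {Ψ : Ω → ℝ} (hΨm : Measurable[mG] Ψ) (hΨ01 : ∀ ω, Ψ ω ∈ Set.Icc (0 : ℝ) 1)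
    (hΨ : Ψ =ᵐ[P] P[A.indicator (fun _ => (1 : ℝ)) | mG])
    (B : ℝ → ℝ) (hB : ∀ t, B t = cwLoss P A {ω | Ψ ω > t} t) :
    (∀ t ∈ Set.Icc (0 : ℝ) 1, B t = ∫ ω, min ((1 - t) * Ψ ω) (t * (1 - Ψ ω)) ∂P)
    ∧ ConcaveOn ℝ (Set.Icc (0 : ℝ) 1) B
    ∧ ContinuousOn B (Set.Icc (0 : ℝ) 1)
    ∧ B 0 = 0 := by
  obtain rfl : B = fun t => ∫ ω, bayesRisk t (Ψ ω) ∂P :=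
    funext fun t => (hB t).trans (cwLoss_eq_integral_bayesRisk (hG.trans hH) hA hΨm hΨ t)
  have hint : ∀ t, Integrable (fun ω => bayesRisk t (Ψ ω)) P :=
    integrable_bayesRisk_comp (integrable_condExp.congr hΨ.symm)
  refine ⟨fun t _ => rfl, ?_, ?_, ?_⟩
  · exact integral_concaveOn_of_integrand_ae (convex_Icc 0 1)
      (ae_of_all _ fun ω =>
        (concaveOn_bayesRisk (Ψ ω)).subset (Set.subset_univ _) (convex_Icc 0 1))
      fun t _ => hint t
  · exact (lipschitzWith_integral hint fun ω => lipschitzWith_bayesRisk (hΨ01 ω)).continuous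
      |>.continuousOn
  · simp only [bayesRisk_zero_left (hΨ01 _).1, integral_zero]

/-- **Proposition 7, items 1 (Brier curve of a calibrated classifier)**: for a `[0,1]`-valued
version `Ψ` of `P[A | 𝒢]`, `𝒢 ⊆ ℋ`, the Brier curve `B(t) = L({Ψ > t}, t)` satisfies
`B(t) = E[min((1 − t) Ψ, t (1 − Ψ))]` for `t ∈ [0, 1]`; in particular `B` is concave and
continuous on `[0, 1]` with `B(0) = 0`. -/
theorem brier_curve_representation_concave_continuous
    {Ω : Type*} {mΩ : MeasurableSpace Ω} {P : Measure Ω} [IsProbabilityMeasure P]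
    {A : Set Ω} (hA : MeasurableSet A) (hA0 : 0 < P A) (hA1 : P A < 1)
    {mH : MeasurableSpace Ω} (hH : mH ≤ mΩ) (hAH : ¬ MeasurableSet[mH] A)
    {mG : MeasurableSpace Ω} (hG : mG ≤ mH)
    {Ψ : Ω → ℝ} (hΨm : Measurable[mG] Ψ) (hΨ01 : ∀ ω, Ψ ω ∈ Set.Icc (0 : ℝ) 1)
    (hΨ : Ψ =ᵐ[P] P[A.indicator (fun _ => (1 : ℝ)) | mG])
    (B : ℝ → ℝ) (hB : ∀ t, B t = cwLoss P A {ω | Ψ ω > t} t) :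
    (∀ t ∈ Set.Icc (0 : ℝ) 1, B t = ∫ ω, min ((1 - t) * Ψ ω) (t * (1 - Ψ ω)) ∂P)
    ∧ ConcaveOn ℝ (Set.Icc (0 : ℝ) 1) B
    ∧ ContinuousOn B (Set.Icc (0 : ℝ) 1)
    ∧ B 0 = 0 :=
  brier_curve_representation_concave_continuous_general hA hH hG hΨm hΨ01 hΨ B hB
end

section
/- Let 𝒢 be a sub-σ-field of ℋ and let Q be another probability measure on (Ω, 𝒜) related to P through a prior probability shift on 𝒢: for some p, q ∈ (0,1), q = Q[A] ≠ P[A] = p, and Q[G | A] = P[G | A] and Q[G | Aᶜ] = P[G | Aᶜ] for all G ∈ 𝒢. Let Ψ_Q = Q[A | 𝒢], Ψ_P = P[A | 𝒢], and for t ∈ [0,1] set B_Q(t) = (1−t) Q[A ∩ {Ψ_Q ≤ t}] + t Q[Aᶜ ∩ {Ψ_Q > t}] and B_P(t) = (1−t) P[A ∩ {Ψ_P ≤ t}] + t P[Aᶜ ∩ {Ψ_P > t}]. Then for all 0 < t < 1, B_Q(t) / ((1−t) q) = B_P(s) / ((1−s) p), where s = ((1−q) p t) / ((p−q) t + q (1−p)).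 -/
/-!
Under a prior probability shift the class-conditional laws agree on `𝒢`, so on `𝒢` the measure
`Q` restricted to `A` is `a = q / p` times `P` restricted to `A`, and on `Aᶜ` the factor is
`b = (1 - q) / (1 - p)`. Bayes' rule then makes the `Q`-posterior the increasing function
`x ↦ a x / (a x + b (1 - x))` of the `P`-posterior, whose inverse is the same map with `a` and `b`
swapped. Hence `{Ψ_Q ≤ t}` (`Q`-a.e.) and `{Ψ_P ≤ s}` (`P`-a.e.) are one and the same
`𝒢`-measurable set, whose masses on `A` under `Q` and `P` differ by the factor `a`, those of its
complement on `Aᶜ` by `b`, and the identity is algebra.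
-/

open MeasureTheory Set

/-- Bayes' rule: the posterior probability of a class of prior probability `x` after its
likelihood is scaled by `a` and that of its complement by `b`. -/
noncomputable def reweightedPosterior (a b x : ℝ) : ℝ := a * x / (a * x + b * (1 - x))

section Reweighting

variable {a b x : ℝ}

lemma mul_add_mul_one_sub_pos (ha : 0 < a) (hb : 0 < b) (hx : x ∈ Icc (0 : ℝ) 1) :
    0 < a * x + b * (1 - x) := by
  obtain ⟨hx0, hx1⟩ := hx
  nlinarith [mul_nonneg ha.le hx0, mul_nonneg hb.le (sub_nonneg.2 hx1)]

lemma reweightedPosterior_mem_Icc (ha : 0 < a) (hb : 0 < b) (hx : x ∈ Icc (0 : ℝ) 1) :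
    reweightedPosterior a b x ∈ Icc (0 : ℝ) 1 := by
  have hd := mul_add_mul_one_sub_pos ha hb hx
  refine ⟨div_nonneg (mul_nonneg ha.le hx.1) hd.le, (div_le_one hd).2 ?_⟩
  nlinarith [mul_nonneg hb.le (sub_nonneg.2 hx.2)]

lemma reweightedPosterior_mul_denom (ha : 0 < a) (hb : 0 < b) (hx : x ∈ Icc (0 : ℝ) 1) :
    reweightedPosterior a b x * (a * x + b * (1 - x)) = a * x :=
  div_mul_cancel₀ _ (mul_add_mul_one_sub_pos ha hb hx).ne'

lemma reweightedPosterior_le_iff (ha : 0 < a) (hb : 0 < b) (hx : x ∈ Icc (0 : ℝ) 1) {t : ℝ}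
    (ht : t ∈ Icc (0 : ℝ) 1) :
    reweightedPosterior a b x ≤ t ↔ x ≤ reweightedPosterior b a t := by
  unfold reweightedPosterior
  rw [div_le_iff₀ (mul_add_mul_one_sub_pos ha hb hx),
    le_div_iff₀ (mul_add_mul_one_sub_pos hb ha ht)]
  constructor <;> intro h <;> nlinarith

lemma reweightedPosterior_div_one_sub_mul (ha : 0 < a) (hb : 0 < b) {t : ℝ}
    (ht : t ∈ Icc (0 : ℝ) 1) (X Y c : ℝ) :
    ((1 - reweightedPosterior b a t) * X + reweightedPosterior b a t * Y)
        / ((1 - reweightedPosterior b a t) * c)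
      = ((1 - t) * (a * X) + t * (b * Y)) / ((1 - t) * (a * c)) := by
  have hD := (mul_add_mul_one_sub_pos hb ha ht).ne'
  have h1s : 1 - reweightedPosterior b a t = a * (1 - t) / (b * t + a * (1 - t)) := by
    unfold reweightedPosterior; field_simp; ring
  calc _ = ((a * (1 - t) * X + b * t * Y) / (b * t + a * (1 - t)))
        / (a * (1 - t) * c / (b * t + a * (1 - t))) := by
          rw [h1s, reweightedPosterior]; ring
    _ = _ := by rw [div_div_div_cancel_right₀ hD]; ring

end Reweighting

section PriorShift

variable {Ω : Type*} {m m0 : MeasurableSpace Ω} {P Q : Measure Ω}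

lemma trim_restrict_eq_smul_of_mul_eq [IsFiniteMeasure P] [IsFiniteMeasure Q] (hm : m ≤ m0)
    {B : Set Ω} (hPB : P B ≠ 0) (h : ∀ G, MeasurableSet[m] G → Q (G ∩ B) * P B = P (G ∩ B) * Q B) :
    (Q.restrict B).trim hm = ENNReal.ofReal (Q.real B / P.real B) • (P.restrict B).trim hm := by
  rw [measureReal_def, measureReal_def, ← ENNReal.toReal_div,
    ENNReal.ofReal_toReal (ENNReal.div_ne_top (measure_ne_top _ _) hPB)]
  refine @Measure.ext Ω m _ _ fun G hG => ?_
  rw [trim_measurableSet_eq hm hG, Measure.smul_apply, trim_measurableSet_eq hm hG,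
    Measure.restrict_apply (hm G hG), Measure.restrict_apply (hm G hG), smul_eq_mul, mul_comm,
    ← mul_div_assoc, ENNReal.eq_div_iff hPB (measure_ne_top _ _), mul_comm (P B), h G hG]

lemma integral_eq_toReal_mul_of_trim_eq_smul (hm : m ≤ m0) {μ ν : Measure Ω} {c : ENNReal}
    (h : μ.trim hm = c • ν.trim hm) {u : Ω → ℝ} (hu : StronglyMeasurable[m] u) :
    ∫ ω, u ω ∂μ = c.toReal * ∫ ω, u ω ∂ν := by
  rw [integral_trim hm hu, h, integral_smul_measure, ← integral_trim hm hu, smul_eq_mul]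

lemma measureReal_inter_eq_mul_of_trim_restrict_eq_smul (hm : m ≤ m0) {B S : Set Ω} {c : ℝ}
    (hc : 0 ≤ c) (h : (Q.restrict B).trim hm = ENNReal.ofReal c • (P.restrict B).trim hm)
    (hS : MeasurableSet[m] S) : Q.real (B ∩ S) = c * P.real (B ∩ S) := by
  have := congrArg (fun μ : @Measure Ω m => (μ S).toReal) h
  simpa [trim_measurableSet_eq hm hS, Measure.restrict_apply (hm S hS), inter_comm,
    measureReal_def, hc] using this

lemma setIntegral_eq_integral_mul_condExp_indicator [IsFiniteMeasure P] (hm : m ≤ m0) {B : Set Ω}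
    (hB : MeasurableSet B) {u : Ω → ℝ} (hu : StronglyMeasurable[m] u) (huP : Integrable u P) :
    ∫ ω in B, u ω ∂P = ∫ ω, u ω * P[B.indicator (fun _ => (1 : ℝ)) | m] ω ∂P := by
  have hmul : u * B.indicator (fun _ => (1 : ℝ)) = B.indicator u := by
    ext ω; by_cases hω : ω ∈ B <;> simp [hω]
  calc ∫ ω in B, u ω ∂P = ∫ ω, (u * B.indicator fun _ => (1 : ℝ)) ω ∂P := by
        rw [hmul, integral_indicator hB]
    _ = ∫ ω, P[u * B.indicator (fun _ => (1 : ℝ)) | m] ω ∂P := (integral_condExp hm).symm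
    _ = ∫ ω, u ω * P[B.indicator (fun _ => (1 : ℝ)) | m] ω ∂P :=
        integral_congr_ae (condExp_mul_of_stronglyMeasurable_left hu (hmul ▸ huP.indicator hB)
          ((integrable_const 1).indicator hB))

lemma condExp_indicator_compl_ae_eq [IsFiniteMeasure P] (hm : m ≤ m0) {B : Set Ω}
    (hB : MeasurableSet B) :
    P[Bᶜ.indicator (fun _ => (1 : ℝ)) | m]
      =ᵐ[P] fun ω => 1 - P[B.indicator (fun _ => (1 : ℝ)) | m] ω := by
  rw [indicator_compl]
  filter_upwards [condExp_sub (integrable_const (1 : ℝ)) ((integrable_const 1).indicator hB) m]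
    with ω h
  rw [h, Pi.sub_apply, condExp_const hm]

lemma exists_condExp_indicator_ae_eq_mem_Icc [IsFiniteMeasure P] (hm : m ≤ m0) {B : Set Ω}
    (hB : MeasurableSet B) :
    ∃ ψ : Ω → ℝ, StronglyMeasurable[m] ψ ∧ (∀ ω, ψ ω ∈ Icc (0 : ℝ) 1) ∧
      ψ =ᵐ[P] P[B.indicator (fun _ => (1 : ℝ)) | m] := by
  set Ψ := P[B.indicator (fun _ => (1 : ℝ)) | m]
  refine ⟨fun ω => max 0 (min 1 (Ψ ω)),
    (measurable_const.max
      (measurable_const.min stronglyMeasurable_condExp.measurable)).stronglyMeasurable,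
    fun ω => ⟨le_max_left _ _, max_le zero_le_one (min_le_left _ _)⟩, ?_⟩
  have h0 : 0 ≤ᵐ[P] Ψ :=
    condExp_nonneg (ae_of_all _ fun ω => indicator_nonneg (fun _ _ => zero_le_one) ω)
  have h1 : Ψ ≤ᵐ[P] P[fun _ => (1 : ℝ) | m] :=
    condExp_mono ((integrable_const 1).indicator hB) (integrable_const 1)
      (ae_of_all _ fun ω => indicator_le_self' (fun _ _ => zero_le_one) ω)
  rw [condExp_const hm] at h1
  filter_upwards [h0, h1] with ω (h0 : 0 ≤ Ψ ω) (h1 : Ψ ω ≤ 1)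
  rw [min_eq_right h1, max_eq_right h0]

lemma setIntegral_eq_integral_mul_of_trim_restrict_eq_smul [IsFiniteMeasure P] (hm : m ≤ m0)
    {B : Set Ω} (hB : MeasurableSet B) {c : ℝ} (hc : 0 ≤ c)
    (h : (Q.restrict B).trim hm = ENNReal.ofReal c • (P.restrict B).trim hm) {φ : Ω → ℝ}
    (hφ : φ =ᵐ[P] P[B.indicator (fun _ => (1 : ℝ)) | m]) {u : Ω → ℝ}
    (hu : StronglyMeasurable[m] u) (huP : Integrable u P) :
    ∫ ω in B, u ω ∂Q = ∫ ω, u ω * (c * φ ω) ∂P := by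
  rw [integral_eq_toReal_mul_of_trim_eq_smul hm h hu, ENNReal.toReal_ofReal hc,
    setIntegral_eq_integral_mul_condExp_indicator hm hB hu huP, ← integral_const_mul]
  refine integral_congr_ae ?_
  filter_upwards [hφ] with ω h
  rw [h]; ring

lemma integral_eq_integral_mul_of_trim_restrict_eq_smul [IsFiniteMeasure P] [IsFiniteMeasure Q]
    (hm : m ≤ m0) {A : Set Ω} (hA : MeasurableSet A) {a b : ℝ} (ha : 0 ≤ a) (hb : 0 ≤ b)
    (hQA : (Q.restrict A).trim hm = ENNReal.ofReal a • (P.restrict A).trim hm)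
    (hQAc : (Q.restrict Aᶜ).trim hm = ENNReal.ofReal b • (P.restrict Aᶜ).trim hm)
    {ψ : Ω → ℝ} (hψm : StronglyMeasurable[m] ψ) (hψ01 : ∀ ω, ψ ω ∈ Icc (0 : ℝ) 1)
    (hψ : ψ =ᵐ[P] P[A.indicator (fun _ => (1 : ℝ)) | m]) {u : Ω → ℝ}
    (hu : StronglyMeasurable[m] u) {C : ℝ} (hu_bdd : ∀ ω, ‖u ω‖ ≤ C) :
    ∫ ω, u ω ∂Q = ∫ ω, u ω * (a * ψ ω + b * (1 - ψ ω)) ∂P := by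
  have hψc : (fun ω => 1 - ψ ω) =ᵐ[P] P[Aᶜ.indicator (fun _ => (1 : ℝ)) | m] := by
    filter_upwards [hψ, condExp_indicator_compl_ae_eq hm hA] with ω h hc
    rw [hc, h]
  have huQ : Integrable u Q := .of_bound (hu.mono hm).aestronglyMeasurable C (ae_of_all _ hu_bdd)
  have huP : Integrable u P := .of_bound (hu.mono hm).aestronglyMeasurable C (ae_of_all _ hu_bdd)
  have hprod : ∀ {c : ℝ} {φ : Ω → ℝ}, 0 ≤ c → StronglyMeasurable[m] φ →
      (∀ ω, φ ω ∈ Icc (0 : ℝ) 1) → Integrable (fun ω => u ω * (c * φ ω)) P :=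
    fun hc hφ h01 => huP.mul_bdd ((hφ.mono hm).aestronglyMeasurable.const_mul _)
      (ae_of_all _ fun ω => by
        rw [Real.norm_eq_abs, abs_of_nonneg (mul_nonneg hc (h01 ω).1)]
        exact mul_le_of_le_one_right hc (h01 ω).2)
  rw [← integral_add_compl hA huQ,
    setIntegral_eq_integral_mul_of_trim_restrict_eq_smul hm hA ha hQA hψ hu huP,
    setIntegral_eq_integral_mul_of_trim_restrict_eq_smul hm hA.compl hb hQAc hψc hu huP,
    ← integral_add (hprod ha hψm hψ01) (hprod (φ := fun ω => 1 - ψ ω) hb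
      (stronglyMeasurable_const.sub hψm)
      fun ω => ⟨by linarith [(hψ01 ω).2], by linarith [(hψ01 ω).1]⟩)]
  simp only [mul_add]

lemma measurable_reweightedPosterior (a b : ℝ) : Measurable (reweightedPosterior a b) := by
  unfold reweightedPosterior; fun_prop

theorem condExp_indicator_ae_eq_reweightedPosterior [IsFiniteMeasure P] [IsFiniteMeasure Q]
    (hm : m ≤ m0) {A : Set Ω} (hA : MeasurableSet A) {a b : ℝ} (ha : 0 < a) (hb : 0 < b)
    (hQA : (Q.restrict A).trim hm = ENNReal.ofReal a • (P.restrict A).trim hm)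
    (hQAc : (Q.restrict Aᶜ).trim hm = ENNReal.ofReal b • (P.restrict Aᶜ).trim hm)
    {ψ : Ω → ℝ} (hψm : StronglyMeasurable[m] ψ) (hψ01 : ∀ ω, ψ ω ∈ Icc (0 : ℝ) 1)
    (hψ : ψ =ᵐ[P] P[A.indicator (fun _ => (1 : ℝ)) | m]) :
    Q[A.indicator (fun _ => (1 : ℝ)) | m] =ᵐ[Q] fun ω => reweightedPosterior a b (ψ ω) := by
  set g := fun ω => reweightedPosterior a b (ψ ω)
  have hgm : StronglyMeasurable[m] g :=
    ((measurable_reweightedPosterior a b).comp hψm.measurable).stronglyMeasurable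
  have hg_bdd (ω : Ω) : ‖g ω‖ ≤ 1 := by
    obtain ⟨h0, h1⟩ := reweightedPosterior_mem_Icc ha hb (hψ01 ω)
    exact abs_le.2 ⟨by linarith, h1⟩
  refine (ae_eq_condExp_of_forall_setIntegral_eq hm ((integrable_const 1).indicator hA)
    (fun G _ _ => (Integrable.of_bound (hgm.mono hm).aestronglyMeasurable 1
      (ae_of_all _ hg_bdd)).integrableOn) (fun G hG _ => ?_) hgm.aestronglyMeasurable).symm
  have hGΩ := hm G hG
  calc ∫ ω in G, g ω ∂Q = ∫ ω, G.indicator g ω ∂Q := (integral_indicator hGΩ).symm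
    _ = ∫ ω, G.indicator g ω * (a * ψ ω + b * (1 - ψ ω)) ∂P :=
      integral_eq_integral_mul_of_trim_restrict_eq_smul hm hA ha.le hb.le hQA hQAc hψm hψ01 hψ
        (hgm.indicator hG) fun ω => (norm_indicator_le_norm_self g ω).trans (hg_bdd ω)
    _ = ∫ ω, G.indicator (fun _ => (1 : ℝ)) ω * (a * ψ ω) ∂P := by
      refine integral_congr_ae (ae_of_all _ fun ω => ?_)
      by_cases hω : ω ∈ G
      · simpa [hω] using reweightedPosterior_mul_denom ha hb (hψ01 ω)
      · simp [hω]
    _ = ∫ ω in A, G.indicator (fun _ => (1 : ℝ)) ω ∂Q :=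
      (setIntegral_eq_integral_mul_of_trim_restrict_eq_smul hm hA ha.le hQA hψ
        (stronglyMeasurable_const.indicator hG) ((integrable_const 1).indicator hGΩ)).symm
    _ = ∫ ω in G, A.indicator (fun _ => (1 : ℝ)) ω ∂Q := by
      rw [setIntegral_indicator hGΩ, setIntegral_indicator hA, inter_comm]

lemma measureReal_inter_setOf_congr {μ : Measure Ω} {B : Set Ω} {p r : Ω → Prop}
    (h : ∀ᵐ ω ∂μ, p ω ↔ r ω) : μ.real (B ∩ {ω | p ω}) = μ.real (B ∩ {ω | r ω}) :=
  measureReal_congr (Filter.EventuallyEq.rfl.inter (Filter.eventuallyEq_set.2 h))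

theorem measureReal_inter_condExp_indicator_le_and_gt
    [IsFiniteMeasure P] [IsFiniteMeasure Q]
    (hm : m ≤ m0) {A : Set Ω} (hA : MeasurableSet A) {a b : ℝ} (ha : 0 < a) (hb : 0 < b)
    (hQA : (Q.restrict A).trim hm = ENNReal.ofReal a • (P.restrict A).trim hm)
    (hQAc : (Q.restrict Aᶜ).trim hm = ENNReal.ofReal b • (P.restrict Aᶜ).trim hm)
    {t : ℝ} (ht : t ∈ Icc (0 : ℝ) 1) :
    Q.real (A ∩ {ω | Q[A.indicator (fun _ => (1 : ℝ)) | m] ω ≤ t})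
        = a * P.real (A ∩ {ω | P[A.indicator (fun _ => (1 : ℝ)) | m] ω
          ≤ reweightedPosterior b a t}) ∧
      Q.real (Aᶜ ∩ {ω | Q[A.indicator (fun _ => (1 : ℝ)) | m] ω > t})
        = b * P.real (Aᶜ ∩ {ω | P[A.indicator (fun _ => (1 : ℝ)) | m] ω
          > reweightedPosterior b a t}) := by
  obtain ⟨ψ, hψm, hψ01, hψ⟩ := exists_condExp_indicator_ae_eq_mem_Icc hm (P := P) hA
  have hQ_le : ∀ᵐ ω ∂Q,
      (Q[A.indicator (fun _ => (1 : ℝ)) | m] ω ≤ t ↔ ψ ω ≤ reweightedPosterior b a t) :=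
    (condExp_indicator_ae_eq_reweightedPosterior hm hA ha hb hQA hQAc hψm hψ01 hψ).mono
      fun ω h => h ▸ reweightedPosterior_le_iff ha hb (hψ01 ω) ht
  have hP_le : ∀ᵐ ω ∂P,
      (P[A.indicator (fun _ => (1 : ℝ)) | m] ω ≤ reweightedPosterior b a t
        ↔ ψ ω ≤ reweightedPosterior b a t) := hψ.mono fun ω h => by rw [h]
  constructor
  · rw [measureReal_inter_setOf_congr hQ_le, measureReal_inter_setOf_congr hP_le]
    exact measureReal_inter_eq_mul_of_trim_restrict_eq_smul hm ha.le hQA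
      (hψm.measurable measurableSet_Iic)
  · rw [measureReal_inter_setOf_congr (hQ_le.mono fun _ => lt_iff_lt_of_le_iff_le),
      measureReal_inter_setOf_congr (hP_le.mono fun _ => lt_iff_lt_of_le_iff_le)]
    exact measureReal_inter_eq_mul_of_trim_restrict_eq_smul hm hb.le hQAc
      (hψm.measurable measurableSet_Ioi)

end PriorShift

theorem brier_curve_prior_probability_shift_general
    {Ω : Type*} {mΩ : MeasurableSpace Ω} {P Q : Measure Ω}
    [IsProbabilityMeasure P] [IsProbabilityMeasure Q]
    {A : Set Ω} (hA : MeasurableSet A)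
    {mH : MeasurableSpace Ω} (hH : mH ≤ mΩ)
    {mG : MeasurableSpace Ω} (hG : mG ≤ mH)
    {p q : ℝ} (hp : p = (P A).toReal) (hq : q = (Q A).toReal)
    (hp01 : p ∈ Set.Ioo (0 : ℝ) 1) (hq01 : q ∈ Set.Ioo (0 : ℝ) 1)
    (hshiftA : ∀ G : Set Ω, MeasurableSet[mG] G → Q (G ∩ A) * P A = P (G ∩ A) * Q A)
    (hshiftAc : ∀ G : Set Ω, MeasurableSet[mG] G → Q (G ∩ Aᶜ) * P Aᶜ = P (G ∩ Aᶜ) * Q Aᶜ)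
    (BQ BP : ℝ → ℝ)
    (hBQ : ∀ t, BQ t
      = (1 - t) * (Q (A ∩ {ω | (Q[A.indicator (fun _ => (1 : ℝ)) | mG]) ω ≤ t})).toReal
        + t * (Q (Aᶜ ∩ {ω | (Q[A.indicator (fun _ => (1 : ℝ)) | mG]) ω > t})).toReal)
    (hBP : ∀ s, BP s
      = (1 - s) * (P (A ∩ {ω | (P[A.indicator (fun _ => (1 : ℝ)) | mG]) ω ≤ s})).toReal
        + s * (P (Aᶜ ∩ {ω | (P[A.indicator (fun _ => (1 : ℝ)) | mG]) ω > s})).toReal) :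
    ∀ t ∈ Set.Ioo (0 : ℝ) 1,
      BQ t / ((1 - t) * q)
        = BP ((1 - q) * p * t / ((p - q) * t + q * (1 - p)))
            / ((1 - (1 - q) * p * t / ((p - q) * t + q * (1 - p))) * p) := by
  intro t ht
  obtain ⟨hp0, hp1⟩ := hp01
  obtain ⟨hq0, hq1⟩ := hq01
  have hGΩ : mG ≤ mΩ := hG.trans hH
  have hPA : P.real A = p := hp.symm
  have hQA : Q.real A = q := hq.symm
  have hPAc : P.real Aᶜ = 1 - p := by rw [probReal_compl_eq_one_sub hA, hPA]
  have hQAc : Q.real Aᶜ = 1 - q := by rw [probReal_compl_eq_one_sub hA, hQA]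
  have hA_trim := trim_restrict_eq_smul_of_mul_eq hGΩ
    ((measureReal_ne_zero_iff).1 (hPA ▸ hp0.ne')) hshiftA
  have hAc_trim := trim_restrict_eq_smul_of_mul_eq hGΩ
    ((measureReal_ne_zero_iff).1 (hPAc ▸ (sub_pos.2 hp1).ne')) hshiftAc
  rw [hQA, hPA] at hA_trim
  rw [hQAc, hPAc] at hAc_trim
  have ha : 0 < q / p := div_pos hq0 hp0
  have hb : 0 < (1 - q) / (1 - p) := div_pos (by linarith) (by linarith)
  have hs : (1 - q) * p * t / ((p - q) * t + q * (1 - p))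
      = reweightedPosterior ((1 - q) / (1 - p)) (q / p) t := by
    unfold reweightedPosterior
    field_simp
    ring
  obtain ⟨hQ_le, hQ_gt⟩ := measureReal_inter_condExp_indicator_le_and_gt hGΩ hA ha hb
    hA_trim hAc_trim ⟨ht.1.le, ht.2.le⟩
  rw [hs, hBQ, hBP, ← measureReal_def, ← measureReal_def, ← measureReal_def, ← measureReal_def,
    hQ_le, hQ_gt, reweightedPosterior_div_one_sub_mul ha hb ⟨ht.1.le, ht.2.le⟩,
    div_mul_cancel₀ q hp0.ne']

/-- **Proposition 7, item 6 (prior probability shift transforms Brier curves)**: if `Q` and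
`P` are related through prior probability shift on `𝒢` (same class-conditional distributions
on `𝒢`, different prior probabilities `q = Q[A] ≠ P[A] = p`), then the Brier curves of the
posterior probabilities `Ψ_Q = Q[A | 𝒢]` and `Ψ_P = P[A | 𝒢]` satisfy
`B_Q(t) / ((1 − t) q) = B_P(s) / ((1 − s) p)` with `s = (1 − q) p t / ((p − q) t + q (1 − p))`
for all `0 < t < 1`. -/
theorem brier_curve_prior_probability_shift
    {Ω : Type*} {mΩ : MeasurableSpace Ω} {P Q : Measure Ω}
    [IsProbabilityMeasure P] [IsProbabilityMeasure Q]
    {A : Set Ω} (hA : MeasurableSet A)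
    {mH : MeasurableSpace Ω} (hH : mH ≤ mΩ) (hAH : ¬ MeasurableSet[mH] A)
    {mG : MeasurableSpace Ω} (hG : mG ≤ mH)
    {p q : ℝ} (hp : p = (P A).toReal) (hq : q = (Q A).toReal)
    (hp01 : p ∈ Set.Ioo (0 : ℝ) 1) (hq01 : q ∈ Set.Ioo (0 : ℝ) 1) (hqp : q ≠ p)
    (hshiftA : ∀ G : Set Ω, MeasurableSet[mG] G → Q (G ∩ A) * P A = P (G ∩ A) * Q A)
    (hshiftAc : ∀ G : Set Ω, MeasurableSet[mG] G → Q (G ∩ Aᶜ) * P Aᶜ = P (G ∩ Aᶜ) * Q Aᶜ)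
    (BQ BP : ℝ → ℝ)
    (hBQ : ∀ t, BQ t
      = (1 - t) * (Q (A ∩ {ω | (Q[A.indicator (fun _ => (1 : ℝ)) | mG]) ω ≤ t})).toReal
        + t * (Q (Aᶜ ∩ {ω | (Q[A.indicator (fun _ => (1 : ℝ)) | mG]) ω > t})).toReal)
    (hBP : ∀ s, BP s
      = (1 - s) * (P (A ∩ {ω | (P[A.indicator (fun _ => (1 : ℝ)) | mG]) ω ≤ s})).toReal
        + s * (P (Aᶜ ∩ {ω | (P[A.indicator (fun _ => (1 : ℝ)) | mG]) ω > s})).toReal) :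
    ∀ t ∈ Set.Ioo (0 : ℝ) 1,
      BQ t / ((1 - t) * q)
        = BP ((1 - q) * p * t / ((p - q) * t + q * (1 - p)))
            / ((1 - (1 - q) * p * t / ((p - q) * t + q * (1 - p))) * p) :=
  brier_curve_prior_probability_shift_general hA hH hG hp hq hp01 hq01 hshiftA hshiftAc BQ BP hBQ
    hBP
end

section
/- Let Ψ = P[A | ℋ] be a version of the conditional probability with values in [0,1] and assume there is a number q ∈ [0,1] with P[Ψ ≤ q] = 1 − P[A]. Then the refinement loss E[Ψ(1−Ψ)] satisfies the bounds 1 − corr[1_A, 1_{Ψ > q}] ≤ E[Ψ(1−Ψ)] / (P[A](1−P[A])) ≤ 1 − corr[1_A, 1_{Ψ > q}]², where corr[X, Y] = cov[X, Y] / (√var[X] · √var[Y]) denotes the Pearson correlation coefficient. -/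
/-! Write `f = 1_A`, `g = 1_{Ψ > q}` and `p = P[A]`. The choice of `q` makes `E g = p`, which is also
`E Ψ`; hence `Var f = Var g = p (1 - p)`, and since `{Ψ > q} ∈ ℋ` the tower property gives
`cov[f, g] = cov[Ψ, g]`. The refinement loss is `E[Ψ (1 - Ψ)] = p (1 - p) - Var Ψ`, so after
dividing by `p (1 - p)` the two bounds become `Var Ψ ≤ cov[Ψ, g]` and
`cov[Ψ, g]² ≤ Var Ψ · Var g`. The second is Cauchy–Schwarz; the first holds because
`(Ψ - q)(g - Ψ) ≥ 0` pointwise while `E[g - Ψ] = 0`. -/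

open MeasureTheory

/-- Expectation of a real random variable w.r.t. `P`. -/
noncomputable def pMean {Ω : Type*} {mΩ : MeasurableSpace Ω} (P : Measure Ω) (X : Ω → ℝ) : ℝ :=
  ∫ ω, X ω ∂P

/-- Covariance `cov[X, Y] = E[(X − E X)(Y − E Y)]`. -/
noncomputable def pCov {Ω : Type*} {mΩ : MeasurableSpace Ω} (P : Measure Ω) (X Y : Ω → ℝ) : ℝ :=
  ∫ ω, (X ω - pMean P X) * (Y ω - pMean P Y) ∂P

/-- Pearson correlation `corr[X, Y] = cov[X, Y] / (√var[X] · √var[Y])`. -/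
noncomputable def pCorr {Ω : Type*} {mΩ : MeasurableSpace Ω} (P : Measure Ω) (X Y : Ω → ℝ) : ℝ :=
  pCov P X Y / (Real.sqrt (pCov P X X) * Real.sqrt (pCov P Y Y))

namespace ProbabilityTheory

variable {Ω : Type*} {mΩ : MeasurableSpace Ω} {μ : Measure Ω} {X X' Y : Ω → ℝ}

lemma covariance_congr_left (h : X =ᵐ[μ] X') : cov[X, Y; μ] = cov[X', Y; μ] := by
  rw [covariance, covariance, integral_congr_ae h]
  exact integral_congr_ae (by filter_upwards [h] with ω hω; rw [hω])

lemma integral_mul_eq_inner_toLp (hX : MemLp X 2 μ) (hY : MemLp Y 2 μ) :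
    ∫ ω, X ω * Y ω ∂μ = inner ℝ (hX.toLp X) (hY.toLp Y) := by
  rw [L2.inner_def]
  refine integral_congr_ae ?_
  filter_upwards [hX.coeFn_toLp, hY.coeFn_toLp] with ω hXω hYω
  simp [hXω, hYω, mul_comm]

lemma covariance_sq_le_variance_mul_variance [IsFiniteMeasure μ] (hX : MemLp X 2 μ)
    (hY : MemLp Y 2 μ) : cov[X, Y; μ] ^ 2 ≤ Var[X; μ] * Var[Y; μ] := by
  have hX' : MemLp (fun ω => X ω - μ[X]) 2 μ := hX.sub (memLp_const _)
  have hY' : MemLp (fun ω => Y ω - μ[Y]) 2 μ := hY.sub (memLp_const _)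
  rw [← covariance_self hX.aemeasurable, ← covariance_self hY.aemeasurable, covariance,
    covariance, covariance, integral_mul_eq_inner_toLp hX' hY',
    integral_mul_eq_inner_toLp hX' hX', integral_mul_eq_inner_toLp hY' hY', sq]
  exact real_inner_mul_inner_self_le _ _

lemma covariance_condExp_left {m : MeasurableSpace Ω} (hm : m ≤ mΩ) [IsProbabilityMeasure μ]
    (hX : MemLp X 2 μ) (hY : MemLp Y 2 μ) (hYm : AEStronglyMeasurable[m] Y μ) :
    cov[μ[X | m], Y; μ] = cov[X, Y; μ] := by
  have h_pull : μ[μ[X | m] * Y] = μ[X * Y] := by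
    rw [← integral_condExp hm (f := X * Y)]
    exact integral_congr_ae (condExp_mul_of_aestronglyMeasurable_right hYm
      (hX.integrable_mul hY) (hX.integrable one_le_two)).symm
  rw [covariance_eq_sub (hX.condExp one_le_two) hY, covariance_eq_sub hX hY, h_pull,
    integral_condExp hm]

lemma variance_indicator_one [IsProbabilityMeasure μ] {B : Set Ω} (hB : MeasurableSet B) :
    Var[B.indicator 1; μ] = μ.real B * (1 - μ.real B) := by
  have hB2 : MemLp (B.indicator (1 : Ω → ℝ)) 2 μ :=
    memLp_indicator_const 2 hB 1 (Or.inr (measure_ne_top μ B))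
  have hsq : B.indicator (1 : Ω → ℝ) ^ 2 = B.indicator 1 := by
    ext ω; by_cases h : ω ∈ B <;> simp [h]
  rw [variance_eq_sub hB2, hsq, integral_indicator_one hB]
  ring

lemma integral_mul_one_sub_eq_sub_variance [IsProbabilityMeasure μ] (hX : MemLp X 2 μ) :
    ∫ ω, X ω * (1 - X ω) ∂μ = μ[X] * (1 - μ[X]) - Var[X; μ] := by
  rw [variance_eq_sub hX]
  simp_rw [mul_one_sub, ← sq]
  rw [integral_sub (hX.integrable one_le_two) hX.integrable_sq]
  simp only [Pi.pow_apply]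
  ring

lemma variance_le_covariance_indicator_lt [IsProbabilityMeasure μ] (hXm : Measurable X)
    (hX01 : ∀ᵐ ω ∂μ, X ω ∈ Set.Icc 0 1) (q : ℝ)
    (hmean : μ[{ω | q < X ω}.indicator 1] = μ[X]) :
    Var[X; μ] ≤ cov[X, {ω | q < X ω}.indicator 1; μ] := by
  set g : Ω → ℝ := {ω | q < X ω}.indicator 1
  have hX : MemLp X 2 μ := memLp_of_bounded hX01 hXm.aestronglyMeasurable 2
  have hg : MemLp g 2 μ := memLp_indicator_const 2 (measurableSet_lt measurable_const hXm) 1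
    (Or.inr (measure_ne_top μ _))
  have hXq : MemLp (fun ω => X ω - q) 2 μ := hX.sub (memLp_const q)
  have h_nonneg : ∀ᵐ ω ∂μ, 0 ≤ ((fun ω => X ω - q) * (g - X)) ω := by
    filter_upwards [hX01] with ω ⟨h0, h1⟩
    change 0 ≤ (X ω - q) * (g ω - X ω)
    rcases lt_or_ge q (X ω) with h | h
    · rw [show g ω = 1 from Set.indicator_of_mem (s := {ω | q < X ω}) h 1]
      nlinarith
    · rw [show g ω = 0 from Set.indicator_of_notMem (s := {ω | q < X ω}) h.not_gt 1]
      nlinarith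
  have h_centered : μ[g - X] = 0 := by
    rw [Pi.sub_def, integral_sub (hg.integrable one_le_two) (hX.integrable one_le_two), hmean,
      sub_self]
  calc Var[X; μ] ≤ cov[fun ω => X ω - q, g - X; μ] + Var[X; μ] := by
        rw [covariance_eq_sub hXq (hg.sub hX), h_centered, mul_zero, sub_zero]
        exact le_add_of_nonneg_left (integral_nonneg_of_ae h_nonneg)
    _ = cov[X, g; μ] := by
        rw [covariance_sub_const_left (hX.integrable one_le_two), covariance_sub_right hX hg hX,
          covariance_self hXm.aemeasurable, sub_add_cancel]

end ProbabilityTheory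

open ProbabilityTheory

lemma pCorr_eq_covariance_div {Ω : Type*} {mΩ : MeasurableSpace Ω} {μ : Measure Ω}
    {X Y : Ω → ℝ} (hX : AEMeasurable X μ) (hY : AEMeasurable Y μ) :
    pCorr μ X Y = cov[X, Y; μ] / (√Var[X; μ] * √Var[Y; μ]) := by
  rw [pCorr, ← covariance_self hX, ← covariance_self hY]
  rfl

lemma measureReal_mul_one_sub_pos {Ω : Type*} {mΩ : MeasurableSpace Ω} {μ : Measure Ω}
    {A : Set Ω} (h0 : 0 < μ A) (h1 : μ A < 1) : 0 < μ.real A * (1 - μ.real A) :=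
  mul_pos (ENNReal.toReal_pos h0.ne' h1.ne_top)
    (sub_pos.2 (ENNReal.toReal_lt_of_lt_ofReal (by rwa [ENNReal.ofReal_one])))

lemma one_sub_div_le_one_sub_div_sq {s v c : ℝ} (hs : 0 < s) (hvc : v ≤ c)
    (hcs : c ^ 2 ≤ v * s) : 1 - c / s ≤ 1 - v / s ∧ 1 - v / s ≤ 1 - (c / s) ^ 2 := by
  refine ⟨by gcongr, ?_⟩
  rw [div_pow, sub_le_sub_iff_left, div_le_div_iff₀ (by positivity) hs]
  nlinarith

theorem refinement_loss_correlation_bounds_general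
    {Ω : Type*} {mΩ : MeasurableSpace Ω} {P : Measure Ω} [IsProbabilityMeasure P]
    {A : Set Ω} (hA : MeasurableSet A) (hA0 : 0 < P A) (hA1 : P A < 1)
    {mH : MeasurableSpace Ω} (hH : mH ≤ mΩ)
    {Ψ : Ω → ℝ} (hΨm : Measurable[mH] Ψ) (hΨ01 : ∀ ω, Ψ ω ∈ Set.Icc (0 : ℝ) 1)
    (hΨ : Ψ =ᵐ[P] P[A.indicator (fun _ => (1 : ℝ)) | mH])
    {q : ℝ}
    (hq : (P {ω | Ψ ω ≤ q}).toReal = 1 - (P A).toReal) :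
    1 - pCorr P (A.indicator (fun _ => (1 : ℝ)))
          (Set.indicator {ω | Ψ ω > q} (fun _ => (1 : ℝ)))
        ≤ (∫ ω, Ψ ω * (1 - Ψ ω) ∂P) / ((P A).toReal * (1 - (P A).toReal))
    ∧ (∫ ω, Ψ ω * (1 - Ψ ω) ∂P) / ((P A).toReal * (1 - (P A).toReal))
        ≤ 1 - (pCorr P (A.indicator (fun _ => (1 : ℝ)))
            (Set.indicator {ω | Ψ ω > q} (fun _ => (1 : ℝ)))) ^ 2 := by
  simp only [← measureReal_def, ← Pi.one_def, gt_iff_lt] at hq hΨ ⊢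
  set B := {ω | q < Ψ ω}
  set p := P.real A
  have hBH : MeasurableSet[mH] B := measurableSet_lt measurable_const hΨm
  have hB : MeasurableSet[mΩ] B := hH _ hBH
  have hΨ2 : MemLp Ψ 2 P :=
    memLp_of_bounded (ae_of_all _ hΨ01) (hΨm.mono hH le_rfl).aestronglyMeasurable 2
  have hA2 : MemLp (A.indicator (1 : Ω → ℝ)) 2 P :=
    memLp_indicator_const 2 hA 1 (Or.inr (measure_ne_top P A))
  have hB2 : MemLp (B.indicator (1 : Ω → ℝ)) 2 P :=
    memLp_indicator_const 2 hB 1 (Or.inr (measure_ne_top P B))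
  have hPB : P.real B = p := by
    have hBc : Bᶜ = {ω | Ψ ω ≤ q} := by ext ω; simp [B]
    linarith [probReal_compl_eq_one_sub (μ := P) hB, hBc ▸ hq]
  have hmean : P[Ψ] = p := by
    rw [integral_congr_ae hΨ, integral_condExp hH, integral_indicator_one hA]
  have hs : 0 < p * (1 - p) := measureReal_mul_one_sub_pos hA0 hA1
  have hcorr : pCorr P (A.indicator 1) (B.indicator 1)
      = cov[Ψ, B.indicator 1; P] / (p * (1 - p)) := by
    rw [pCorr_eq_covariance_div hA2.aemeasurable hB2.aemeasurable, variance_indicator_one hA,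
      variance_indicator_one hB, hPB, Real.mul_self_sqrt hs.le,
      ← covariance_condExp_left hH hA2 hB2
        (stronglyMeasurable_const.indicator hBH).aestronglyMeasurable,
      covariance_congr_left hΨ]
  rw [hcorr, integral_mul_one_sub_eq_sub_variance hΨ2, hmean, sub_div, div_self hs.ne']
  refine one_sub_div_le_one_sub_div_sq hs (variance_le_covariance_indicator_lt
    (hΨm.mono hH le_rfl) (ae_of_all _ hΨ01) q (by rw [integral_indicator_one hB, hPB, hmean])) ?_
  simpa only [variance_indicator_one hB, hPB] using
    covariance_sq_le_variance_mul_variance hΨ2 hB2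

/-- **Proposition 8 (bounds for the refinement loss)**: if `Ψ = P[A | ℋ]` (a `[0,1]`-valued
version) and `q` satisfies `P[Ψ ≤ q] = 1 − P[A]`, then
`1 − corr[1_A, 1_{Ψ > q}] ≤ E[Ψ (1 − Ψ)] / (P[A](1 − P[A])) ≤ 1 − corr[1_A, 1_{Ψ > q}]²`. -/
theorem refinement_loss_correlation_bounds
    {Ω : Type*} {mΩ : MeasurableSpace Ω} {P : Measure Ω} [IsProbabilityMeasure P]
    {A : Set Ω} (hA : MeasurableSet A) (hA0 : 0 < P A) (hA1 : P A < 1)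
    {mH : MeasurableSpace Ω} (hH : mH ≤ mΩ) (hAH : ¬ MeasurableSet[mH] A)
    {Ψ : Ω → ℝ} (hΨm : Measurable[mH] Ψ) (hΨ01 : ∀ ω, Ψ ω ∈ Set.Icc (0 : ℝ) 1)
    (hΨ : Ψ =ᵐ[P] P[A.indicator (fun _ => (1 : ℝ)) | mH])
    {q : ℝ} (hq01 : q ∈ Set.Icc (0 : ℝ) 1)
    (hq : (P {ω | Ψ ω ≤ q}).toReal = 1 - (P A).toReal) :
    1 - pCorr P (A.indicator (fun _ => (1 : ℝ)))
          (Set.indicator {ω | Ψ ω > q} (fun _ => (1 : ℝ)))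
        ≤ (∫ ω, Ψ ω * (1 - Ψ ω) ∂P) / ((P A).toReal * (1 - (P A).toReal))
    ∧ (∫ ω, Ψ ω * (1 - Ψ ω) ∂P) / ((P A).toReal * (1 - (P A).toReal))
        ≤ 1 - (pCorr P (A.indicator (fun _ => (1 : ℝ)))
            (Set.indicator {ω | Ψ ω > q} (fun _ => (1 : ℝ)))) ^ 2 :=
  refinement_loss_correlation_bounds_general hA hA0 hA1 hH hΨm hΨ01 hΨ hq
end
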